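/- arXiv:2508.00601 — 4 statements merged into one kernel-verified Lean document; each statement's English description precedes it below -/
import Mathlib

section
/- Let m ≥ 3 be an integer. For every probability weight p = (p₁, p₂), the self-similar measure μ_p is not doubling; that is, sup{ μ_p(B(x,2r)) / μ_p(B(x,r)) : x ∈ supp(μ_p), r > 0 } = ∞. -/
open MeasureTheory

noncomputable section

/-- The contraction maps: `Smap β 0 = S₁ : x ↦ x/β` and `Smap β 1 = S₂ : x ↦ x/β + (1 - 1/β)`. -/
def Smap (β : ℝ) (i : Fin 2) (x : ℝ) : ℝ :=
  if i = 0 then x / β else x / β + (1 - 1 / β)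

/-- `Sapply β I = S_I = S_{i₁} ∘ ⋯ ∘ S_{i_n}` for a word `I = i₁…i_n ∈ {1,2}^n`. -/
def Sapply (β : ℝ) : {n : ℕ} → (Fin n → Fin 2) → ℝ → ℝ
  | 0, _, x => x
  | _+1, I, x => Smap β (I 0) (Sapply β (fun k => I k.succ) x)

/-- `Xn β n = {S_I(0) : I ∈ {1,2}^n} ∪ {1}`. -/
def Xn (β : ℝ) (n : ℕ) : Finset ℝ :=
  (Finset.univ.image fun I : Fin n → Fin 2 => Sapply β I 0) ∪ {1}

/-- `pt β n j = a_{n,j}`, the `j`-th element of `Xn β n` in increasing order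
(junk value `0` if `j` is out of range). -/
def pt (β : ℝ) (n j : ℕ) : ℝ := ((Xn β n).sort (· ≤ ·)).getD j 0

/-- The sequence `d₀ = 1`, `d₁ = β - 1`, `d_{j+1} = β·d_j - d₁`. -/
def dd (β : ℝ) : ℕ → ℝ
  | 0 => 1
  | 1 => β - 1
  | j+2 => β * dd β (j+1) - (β - 1)

/-- The weight of a letter: `pw p₁ p₂ i = p_{i+1}`. -/
def pw (p1 p2 : ℝ) (i : Fin 2) : ℝ := if i = 0 then p1 else p2

/-- `Wn β p₁ p₂ n x = W_n(x) = ∑_{S_I(0)=x, |I|=n} p_I`. -/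
def Wn (β p1 p2 : ℝ) (n : ℕ) (x : ℝ) : ℝ :=
  ∑ I : Fin n → Fin 2, if Sapply β I 0 = x then ∏ k, pw p1 p2 (I k) else 0

/-- A measure with support `[0,1]` is doubling if
`sup { μ(B(x,2r))/μ(B(x,r)) : x ∈ supp μ = [0,1], r > 0 } < ∞`. -/
def IsDoubling (μ : Measure ℝ) : Prop :=
  (⨆ (x : ℝ) (_ : x ∈ Set.Icc (0:ℝ) 1) (r : ℝ) (_ : 0 < r),
    μ (Metric.closedBall x (2 * r)) / μ (Metric.closedBall x r)) < ⊤


open Set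

structure Setup (m : ℕ) (β p1 p2 : ℝ) (μ : Measure ℝ) : Prop where
  hm : 3 ≤ m
  hβ1 : 1 < β
  hβ2 : β < 2
  hβ : β ^ m = ∑ j ∈ Finset.range m, β ^ j
  hp1 : 0 < p1
  hp2 : 0 < p2
  hp : p1 + p2 = 1
  prob : IsProbabilityMeasure μ
  hμ : μ = ENNReal.ofReal p1 • μ.map (Smap β 0) + ENNReal.ofReal p2 • μ.map (Smap β 1)

/-- `γ_j = β^j (2-β)`. -/
def gam (β : ℝ) (j : ℕ) : ℝ := β^j * (2 - β)

lemma smap0 (β : ℝ) : Smap β 0 = fun x => x / β := by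
  funext x; simp [Smap]

lemma smap1 (β : ℝ) : Smap β 1 = fun x => x / β + (1 - 1 / β) := by
  funext x; simp [Smap]

lemma measurable_smap (β : ℝ) (i : Fin 2) : Measurable (Smap β i) := by
  by_cases hi : i = 0
  · simp only [Smap, hi, if_true]; exact measurable_id.div_const β
  · unfold Smap; simp only [if_neg hi]; exact (measurable_id.div_const β).add_const _

section preim

variable {β : ℝ} (hβ0 : 0 < β)
include hβ0

lemma sm1 (x : ℝ) : Smap β 1 x = (x + β - 1)/β := by
  have : β ≠ 0 := ne_of_gt hβ0
  simp only [Smap, if_neg (by decide : (1 : Fin 2) ≠ 0)]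
  field_simp
  ring

omit hβ0 in
lemma sm0 (x : ℝ) : Smap β 0 x = x/β := by simp [Smap]

lemma pre0_Ioc (a b : ℝ) : Smap β 0 ⁻¹' Ioc a b = Ioc (β*a) (β*b) := by
  ext x
  simp only [mem_preimage, sm0, mem_Ioc, lt_div_iff₀ hβ0, div_le_iff₀ hβ0]
  constructor <;> intro ⟨h1, h2⟩ <;> constructor <;> nlinarith

lemma pre0_Icc (a b : ℝ) : Smap β 0 ⁻¹' Icc a b = Icc (β*a) (β*b) := by
  ext x
  simp only [mem_preimage, sm0, mem_Icc, le_div_iff₀ hβ0, div_le_iff₀ hβ0]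
  constructor <;> intro ⟨h1, h2⟩ <;> constructor <;> nlinarith

lemma pre0_Ioi (a : ℝ) : Smap β 0 ⁻¹' Ioi a = Ioi (β*a) := by
  ext x
  simp only [mem_preimage, sm0, mem_Ioi, lt_div_iff₀ hβ0]
  constructor <;> intro h1 <;> nlinarith

lemma pre0_Iio (a : ℝ) : Smap β 0 ⁻¹' Iio a = Iio (β*a) := by
  ext x
  simp only [mem_preimage, sm0, mem_Iio, div_lt_iff₀ hβ0]
  constructor <;> intro h1 <;> nlinarith

lemma pre1_Ioc (a b : ℝ) : Smap β 1 ⁻¹' Ioc a b = Ioc (β*a - β + 1) (β*b - β + 1) := by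
  ext x
  simp only [mem_preimage, sm1 hβ0, mem_Ioc, lt_div_iff₀ hβ0, div_le_iff₀ hβ0]
  constructor <;> intro ⟨h1, h2⟩ <;> constructor <;> nlinarith

lemma pre1_Icc (a b : ℝ) : Smap β 1 ⁻¹' Icc a b = Icc (β*a - β + 1) (β*b - β + 1) := by
  ext x
  simp only [mem_preimage, sm1 hβ0, mem_Icc, le_div_iff₀ hβ0, div_le_iff₀ hβ0]
  constructor <;> intro ⟨h1, h2⟩ <;> constructor <;> nlinarith

lemma pre1_Ioi (a : ℝ) : Smap β 1 ⁻¹' Ioi a = Ioi (β*a - β + 1) := by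
  ext x
  simp only [mem_preimage, sm1 hβ0, mem_Ioi, lt_div_iff₀ hβ0]
  constructor <;> intro h1 <;> nlinarith

lemma pre1_Iio (a : ℝ) : Smap β 1 ⁻¹' Iio a = Iio (β*a - β + 1) := by
  ext x
  simp only [mem_preimage, sm1 hβ0, mem_Iio, div_lt_iff₀ hβ0]
  constructor <;> intro h1 <;> nlinarith

end preim

namespace Setup

variable {m : ℕ} {β p1 p2 : ℝ} {μ : Measure ℝ} (h : Setup m β p1 p2 μ)
include h

lemma hβ0 : (0:ℝ) < β := lt_trans one_pos h.hβ1

/-- `β^m (2 - β) = 1`. -/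
lemma hpow : β ^ m * (2 - β) = 1 := by
  have hg := geom_sum_mul β m
  rw [← h.hβ] at hg
  nlinarith [h.hβ0, pow_pos h.hβ0 m]

lemma hcube : β ^ 2 + β + 1 ≤ β ^ 3 := by
  have h3 : β ^ m = ∑ j ∈ Finset.range m, β ^ j := h.hβ
  have hsub : ({m-3, m-2, m-1} : Finset ℕ) ⊆ Finset.range m := by
    intro x hx
    simp only [Finset.mem_insert, Finset.mem_singleton] at hx
    have hm := h.hm
    rcases hx with rfl | rfl | rfl <;> (simp [Finset.mem_range]; omega)
  have hle : ∑ j ∈ ({m-3, m-2, m-1} : Finset ℕ), β ^ j ≤ ∑ j ∈ Finset.range m, β ^ j := by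
    apply Finset.sum_le_sum_of_subset_of_nonneg hsub
    intro i _ _; exact pow_nonneg (le_of_lt h.hβ0) i
  have hcard : ∑ j ∈ ({m-3, m-2, m-1} : Finset ℕ), β ^ j = β^(m-3) + β^(m-2) + β^(m-1) := by
    have hm := h.hm
    rw [Finset.sum_insert (by simp; omega), Finset.sum_insert (by simp; omega),
      Finset.sum_singleton]
    ring
  have hβ0 := h.hβ0
  have hm := h.hm
  have e1 : β ^ (m-2) = β^(m-3) * β := by rw [← pow_succ]; congr 1; omega
  have e2 : β ^ (m-1) = β^(m-3) * β^2 := by rw [← pow_add]; congr 1; omega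
  have e3 : β ^ m = β^(m-3) * β^3 := by rw [← pow_add]; congr 1; omega
  have hp3 : (0:ℝ) < β^(m-3) := pow_pos hβ0 _
  nlinarith [hle]

lemma hquad : β + 1 < β ^ 2 := by
  have h1 := h.hcube
  have h2 := h.hβ1
  nlinarith

lemma heps : 0 < β - 1 - 1/β := by
  have h1 := h.hquad
  have h0 := h.hβ0
  have h2 : 1/β < β - 1 := by
    rw [div_lt_iff₀ h0]; nlinarith
  linarith


lemma ev (A : Set ℝ) (hA : MeasurableSet A) :
    μ A = ENNReal.ofReal p1 * μ (Smap β 0 ⁻¹' A) + ENNReal.ofReal p2 * μ (Smap β 1 ⁻¹' A) := by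
  conv_lhs => rw [h.hμ]
  rw [Measure.add_apply, Measure.smul_apply, Measure.smul_apply,
    Measure.map_apply (measurable_smap β 0) hA, Measure.map_apply (measurable_smap β 1) hA]
  rfl

lemma psum : ENNReal.ofReal p1 + ENNReal.ofReal p2 = 1 := by
  rw [← ENNReal.ofReal_add (le_of_lt h.hp1) (le_of_lt h.hp2), h.hp, ENNReal.ofReal_one]

lemma measure_Ioi_one : μ (Ioi (1:ℝ)) = 0 := by
  have hβ0 := h.hβ0
  have hβ1 := h.hβ1
  have step : ∀ c : ℝ, μ (Ioi c) ≤ μ (Ioi (β*c - β + 1)) := by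
    intro c
    rw [h.ev (Ioi c) measurableSet_Ioi, pre0_Ioi hβ0, pre1_Ioi hβ0]
    have hsub : μ (Ioi (β*c)) ≤ μ (Ioi (β*c - β + 1)) := by
      apply measure_mono; apply Ioi_subset_Ioi; linarith
    calc ENNReal.ofReal p1 * μ (Ioi (β*c)) + ENNReal.ofReal p2 * μ (Ioi (β*c - β + 1))
        ≤ ENNReal.ofReal p1 * μ (Ioi (β*c - β + 1)) + ENNReal.ofReal p2 * μ (Ioi (β*c - β + 1)) := by
          gcongr
      _ = (ENNReal.ofReal p1 + ENNReal.ofReal p2) * μ (Ioi (β*c - β + 1)) := by ring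
      _ = μ (Ioi (β*c - β + 1)) := by rw [h.psum, one_mul]
  have iter : ∀ (c : ℝ) (k : ℕ), μ (Ioi c) ≤ μ (Ioi (β^k*(c-1)+1)) := by
    intro c k
    induction k with
    | zero => simp
    | succ k ih =>
      refine le_trans ih (le_trans (step _) (le_of_eq ?_))
      congr 1
      congr 1
      ring
  have hiInter : μ (⋂ (n : ℕ), Ioi (n:ℝ)) = ⨅ (n : ℕ), μ (Ioi (n:ℝ)) := by
    apply Directed.measure_iInter
    · exact fun n => (measurableSet_Ioi).nullMeasurableSet
    · intro i j
      exact ⟨max i j, Ioi_subset_Ioi (by exact_mod_cast le_max_left i j),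
        Ioi_subset_Ioi (by exact_mod_cast le_max_right i j)⟩
    · haveI := h.prob; exact ⟨0, measure_ne_top μ _⟩
  have hempty : (⋂ (n : ℕ), Ioi (n:ℝ)) = ∅ := by
    ext x
    simp only [mem_iInter, mem_Ioi, mem_empty_iff_false, iff_false, not_forall, not_lt]
    obtain ⟨n, hn⟩ := exists_nat_gt x
    exact ⟨n, le_of_lt hn⟩
  have hinf : ⨅ (n : ℕ), μ (Ioi (n:ℝ)) = 0 := by
    rw [← hiInter, hempty, measure_empty]
  have main : ∀ c : ℝ, 1 < c → μ (Ioi c) = 0 := by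
    intro c hc
    have hle : ∀ n : ℕ, μ (Ioi c) ≤ μ (Ioi (n:ℝ)) := by
      intro n
      obtain ⟨k, hk⟩ := pow_unbounded_of_one_lt ((n:ℝ)/(c-1)) hβ1
      refine le_trans (iter c k) (measure_mono (Ioi_subset_Ioi ?_))
      rw [div_lt_iff₀ (by linarith)] at hk
      nlinarith [pow_pos hβ0 k]
    have := le_iInf hle
    rw [hinf] at this
    exact le_antisymm this zero_le
  have hcover : Ioi (1:ℝ) ⊆ ⋃ (n : ℕ), Ioi (1 + 1/(n+1) : ℝ) := by
    intro x hx
    simp only [mem_Ioi] at hx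
    obtain ⟨n, hn⟩ := exists_nat_one_div_lt (by linarith : (0:ℝ) < x - 1)
    exact mem_iUnion.2 ⟨n, by simp only [mem_Ioi]; push_cast at hn ⊢; linarith⟩
  refine le_antisymm (le_trans (measure_mono hcover) (le_trans (measure_iUnion_le _) ?_)) zero_le
  have : ∀ n : ℕ, μ (Ioi (1 + 1/(n+1) : ℝ)) = 0 := by
    intro n
    apply main
    have : (0:ℝ) < 1/(n+1) := by positivity
    linarith
  simp only [one_div] at this
  simp [this]

lemma measure_Iio_zero : μ (Iio (0:ℝ)) = 0 := by
  have hβ0 := h.hβ0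
  have hβ1 := h.hβ1
  have step : ∀ c : ℝ, c < 1 → μ (Iio c) ≤ μ (Iio (β*c)) := by
    intro c hc
    rw [h.ev (Iio c) measurableSet_Iio, pre0_Iio hβ0, pre1_Iio hβ0]
    have hsub : μ (Iio (β*c - β + 1)) ≤ μ (Iio (β*c)) := by
      apply measure_mono; apply Iio_subset_Iio; nlinarith
    calc ENNReal.ofReal p1 * μ (Iio (β*c)) + ENNReal.ofReal p2 * μ (Iio (β*c - β + 1))
        ≤ ENNReal.ofReal p1 * μ (Iio (β*c)) + ENNReal.ofReal p2 * μ (Iio (β*c)) := by gcongr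
      _ = (ENNReal.ofReal p1 + ENNReal.ofReal p2) * μ (Iio (β*c)) := by ring
      _ = μ (Iio (β*c)) := by rw [h.psum, one_mul]
  have iter : ∀ (c : ℝ) (k : ℕ), c < 0 → μ (Iio c) ≤ μ (Iio (β^k*c)) := by
    intro c k hc
    induction k with
    | zero => simp
    | succ k ih =>
      refine le_trans ih (le_trans (step _ (by nlinarith [pow_pos hβ0 k])) (le_of_eq ?_))
      congr 1
      congr 1
      ring
  have hiInter : μ (⋂ (n : ℕ), Iio (-(n:ℝ))) = ⨅ (n : ℕ), μ (Iio (-(n:ℝ))) := by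
    apply Directed.measure_iInter
    · exact fun n => (measurableSet_Iio).nullMeasurableSet
    · intro i j
      exact ⟨max i j, Iio_subset_Iio (neg_le_neg (by exact_mod_cast le_max_left i j)),
        Iio_subset_Iio (neg_le_neg (by exact_mod_cast le_max_right i j))⟩
    · haveI := h.prob; exact ⟨0, measure_ne_top μ _⟩
  have hempty : (⋂ (n : ℕ), Iio (-(n:ℝ))) = ∅ := by
    ext x
    simp only [mem_iInter, mem_Iio, mem_empty_iff_false, iff_false, not_forall, not_lt]
    obtain ⟨n, hn⟩ := exists_nat_gt (-x)
    exact ⟨n, by linarith⟩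
  have hinf : ⨅ (n : ℕ), μ (Iio (-(n:ℝ))) = 0 := by
    rw [← hiInter, hempty, measure_empty]
  have main : ∀ c : ℝ, c < 0 → μ (Iio c) = 0 := by
    intro c hc
    have hle : ∀ n : ℕ, μ (Iio c) ≤ μ (Iio (-(n:ℝ))) := by
      intro n
      obtain ⟨k, hk⟩ := pow_unbounded_of_one_lt ((n:ℝ)/(-c)) hβ1
      refine le_trans (iter c k hc) (measure_mono (Iio_subset_Iio ?_))
      rw [div_lt_iff₀ (by linarith)] at hk
      nlinarith [pow_pos hβ0 k]
    have := le_iInf hle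
    rw [hinf] at this
    exact le_antisymm this zero_le
  have hcover : Iio (0:ℝ) ⊆ ⋃ (n : ℕ), Iio (-(1/(n+1)) : ℝ) := by
    intro x hx
    simp only [mem_Iio] at hx
    obtain ⟨n, hn⟩ := exists_nat_one_div_lt (by linarith : (0:ℝ) < -x)
    exact mem_iUnion.2 ⟨n, by simp only [mem_Iio]; push_cast at hn ⊢; linarith⟩
  refine le_antisymm (le_trans (measure_mono hcover) (le_trans (measure_iUnion_le _) ?_)) zero_le
  have : ∀ n : ℕ, μ (Iio (-(1/(n+1)) : ℝ)) = 0 := by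
    intro n
    apply main
    have : (0:ℝ) < 1/(n+1) := by positivity
    linarith
  simp only [one_div] at this
  simp [this]

lemma measure_Icc01 : μ (Icc (0:ℝ) 1) = 1 := by
  haveI := h.prob
  have hcover : (univ : Set ℝ) ⊆ Iio 0 ∪ Icc 0 1 ∪ Ioi 1 := by
    intro x _
    rcases lt_or_ge x 0 with hx | hx
    · exact Or.inl (Or.inl hx)
    · rcases le_or_gt x 1 with hx1 | hx1
      · exact Or.inl (Or.inr ⟨hx, hx1⟩)
      · exact Or.inr hx1
  have h1 : (1:ENNReal) ≤ μ (Icc 0 1) := by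
    calc (1:ENNReal) = μ univ := (measure_univ).symm
      _ ≤ μ (Iio 0 ∪ Icc 0 1 ∪ Ioi 1) := measure_mono hcover
      _ ≤ μ (Iio 0 ∪ Icc 0 1) + μ (Ioi 1) := measure_union_le _ _
      _ ≤ μ (Iio 0) + μ (Icc 0 1) + μ (Ioi 1) := by gcongr; exact measure_union_le _ _
      _ = μ (Icc 0 1) := by rw [h.measure_Iio_zero, h.measure_Ioi_one]; simp
  exact le_antisymm prob_le_one h1




lemma null_Ioc_right (a b : ℝ) (ha : 1 ≤ a) : μ (Ioc a b) = 0 := by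
  exact measure_mono_null (fun x hx => lt_of_le_of_lt ha hx.1) h.measure_Ioi_one

lemma null_Ioc_left (a b : ℝ) (hb : b < 0) : μ (Ioc a b) = 0 := by
  exact measure_mono_null (fun x hx => lt_of_le_of_lt hx.2 hb) h.measure_Iio_zero

lemma gam_pos (j : ℕ) : 0 < gam β j := by
  have := h.hβ0
  have := h.hβ2
  unfold gam
  have : (0:ℝ) < β ^ j := pow_pos h.hβ0 j
  nlinarith

lemma gam_top : gam β (m-1) = 1/β := by
  have hβ0 := h.hβ0
  have hne : β ≠ 0 := ne_of_gt hβ0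
  have hm := h.hm
  have hpw : β^(m-1) * β = β^m := by
    rw [← pow_succ]
    congr 1
    omega
  unfold gam
  rw [eq_div_iff hne]
  calc β^(m-1) * (2-β) * β = (β^(m-1) * β) * (2-β) := by ring
    _ = β^m * (2-β) := by rw [hpw]
    _ = 1 := h.hpow

lemma gam_le (j : ℕ) (hj : j ≤ m-1) : gam β j ≤ 1/β := by
  have h1 : gam β j ≤ gam β (m-1) := by
    unfold gam
    have h2 : β ^ j ≤ β ^ (m-1) := pow_le_pow_right₀ (le_of_lt h.hβ1) hj
    have h3 : (0:ℝ) ≤ 2 - β := by linarith [h.hβ2]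
    nlinarith
  rw [← h.gam_top]
  exact h1

omit h in
lemma gam_succ (β : ℝ) (j : ℕ) : β * gam β j = gam β (j+1) := by
  unfold gam
  rw [pow_succ]
  ring

lemma chainN : ∀ i j : ℕ, i + j = m - 1 → ∀ s : ℝ, 0 < s → β^i * s < β - 1 - 1/β →
    μ (Ioc (gam β j) (gam β j + s)) =
      (ENNReal.ofReal p1)^i * μ (Ioc (1/β) (1/β + β^i * s)) := by
  intro i
  induction i with
  | zero =>
    intro j hj s hs hcond
    have : j = m - 1 := by omega
    subst this
    rw [h.gam_top]
    simp
  | succ i ih =>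
    intro j hj s hs hcond
    have hβ0 := h.hβ0
    have hβ1 := h.hβ1
    have e := h.ev (Ioc (gam β j) (gam β j + s)) measurableSet_Ioc
    rw [pre0_Ioc hβ0, pre1_Ioc hβ0] at e
    have hβs : β * s < β - 1 - 1/β := by
      have h1 : β ≤ β^(i+1) := by
        calc β = β^1 := (pow_one β).symm
          _ ≤ β^(i+1) := pow_le_pow_right₀ (le_of_lt hβ1) (by omega)
      nlinarith
    have hgle : gam β (j+1) ≤ 1/β := h.gam_le (j+1) (by omega)
    have hz : μ (Ioc (β*(gam β j) - β + 1) (β*(gam β j + s) - β + 1)) = 0 := by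
      apply h.null_Ioc_left
      have := gam_succ β j
      nlinarith
    rw [hz, mul_zero, add_zero] at e
    have e2 : β * (gam β j) = gam β (j+1) := gam_succ β j
    have e3 : β * (gam β j + s) = gam β (j+1) + β * s := by rw [mul_add, e2]
    rw [e2, e3] at e
    rw [e, ih (j+1) (by omega) (β*s) (by positivity)
      (by rw [show β^i * (β*s) = β^(i+1)*s by rw [pow_succ]; ring]; exact hcond)]
    rw [show β^i * (β*s) = β^(i+1)*s by rw [pow_succ]; ring, pow_succ]
    ring

lemma Rrec (t : ℝ) (ht : 0 < t) (hcond : β^m * t < β - 1 - 1/β) :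
    μ (Ioc (1/β) (1/β + t)) =
      (ENNReal.ofReal p2 * (ENNReal.ofReal p1)^(m-1)) * μ (Ioc (1/β) (1/β + β^m * t)) := by
  have hβ0 := h.hβ0
  have hne : β ≠ 0 := ne_of_gt hβ0
  have e := h.ev (Ioc (1/β) (1/β + t)) measurableSet_Ioc
  rw [pre0_Ioc hβ0, pre1_Ioc hβ0] at e
  have h1 : β * (1/β) = 1 := by field_simp
  have hz : μ (Ioc (β*(1/β)) (β*(1/β + t))) = 0 := by
    apply h.null_Ioc_right
    rw [h1]
  rw [hz, mul_zero, zero_add] at e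
  have e2 : β * (1/β) - β + 1 = gam β 0 := by
    unfold gam
    rw [h1, pow_zero]
    ring
  have e3 : β * (1/β + t) - β + 1 = gam β 0 + β * t := by
    rw [mul_add, h1]
    unfold gam
    rw [pow_zero]
    ring
  rw [e2, e3] at e
  have hm := h.hm
  have hmm : m - 1 + 0 = m - 1 := by omega
  have hpowc : β^(m-1) * (β * t) = β^m * t := by
    rw [show β^(m-1) * (β*t) = (β^(m-1)*β)*t by ring, ← pow_succ]
    congr 2
    omega
  have hc := h.chainN (m-1) 0 hmm (β*t) (by positivity) (by rw [hpowc]; exact hcond)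
  rw [hc, hpowc] at e
  rw [e]
  ring

lemma Mlow : ∀ k : ℕ, (ENNReal.ofReal p2)^k ≤ μ (Icc (1 - (1/β)^k) 1) := by
  have hβ0 := h.hβ0
  have hne : β ≠ 0 := ne_of_gt hβ0
  intro k
  induction k with
  | zero => simp [h.measure_Icc01]
  | succ k ih =>
    have e := h.ev (Icc (1 - (1/β)^(k+1)) 1) measurableSet_Icc
    rw [pre0_Icc hβ0, pre1_Icc hβ0] at e
    have e1 : β * (1 - (1/β)^(k+1)) - β + 1 = 1 - (1/β)^k := by
      have : β * (1/β)^(k+1) = (1/β)^k := by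
        rw [pow_succ]
        field_simp
      rw [mul_sub, this]
      ring
    have e2 : β * 1 - β + 1 = (1:ℝ) := by ring
    rw [e1, e2] at e
    calc (ENNReal.ofReal p2)^(k+1) = ENNReal.ofReal p2 * (ENNReal.ofReal p2)^k := by ring
      _ ≤ ENNReal.ofReal p2 * μ (Icc (1 - (1/β)^k) 1) := by gcongr
      _ ≤ _ := by rw [e]; exact le_add_self

lemma chainL : ∀ i j : ℕ, i + j = m - 1 → ∀ s : ℝ,
    (ENNReal.ofReal p1)^i * μ (Icc (1/β - β^i * s) (1/β)) ≤
      μ (Icc (gam β j - s) (gam β j)) := by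
  intro i
  induction i with
  | zero =>
    intro j hj s
    have : j = m - 1 := by omega
    subst this
    rw [h.gam_top]
    simp
  | succ i ih =>
    intro j hj s
    have hβ0 := h.hβ0
    have e := h.ev (Icc (gam β j - s) (gam β j)) measurableSet_Icc
    rw [pre0_Icc hβ0, pre1_Icc hβ0] at e
    have e2 : β * (gam β j) = gam β (j+1) := gam_succ β j
    have e3 : β * (gam β j - s) = gam β (j+1) - β * s := by rw [mul_sub, e2]
    rw [e2, e3] at e
    calc (ENNReal.ofReal p1)^(i+1) * μ (Icc (1/β - β^(i+1) * s) (1/β))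
        = ENNReal.ofReal p1 * ((ENNReal.ofReal p1)^i * μ (Icc (1/β - β^i * (β*s)) (1/β))) := by
          rw [show β^(i+1) * s = β^i * (β*s) by rw [pow_succ]; ring]
          ring
      _ ≤ ENNReal.ofReal p1 * μ (Icc (gam β (j+1) - β*s) (gam β (j+1))) := by
          gcongr
          exact ih (j+1) (by omega) (β*s)
      _ ≤ _ := by rw [e]; exact self_le_add_right _ _


lemma betapow (n : ℕ) : β * (1/β)^(n+1) = (1/β)^n := by
  have hne : β ≠ 0 := ne_of_gt h.hβ0
  rw [pow_succ]
  field_simp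

lemma bm_pow (a : ℕ) : β^m * (1/β)^(a+m) = (1/β)^a := by
  have hne : β ≠ 0 := ne_of_gt h.hβ0
  have h1 : β^m * (1/β)^m = 1 := by
    rw [← mul_pow]
    field_simp
    exact one_pow m
  rw [pow_add, show β^m * ((1/β)^a * (1/β)^m) = ((β^m * (1/β)^m)) * (1/β)^a by ring, h1, one_mul]

lemma htwo : (2:ℝ) ≤ β^m := by
  have hβ1 := h.hβ1
  have h1 : β^3 ≤ β^m := pow_le_pow_right₀ (le_of_lt hβ1) h.hm
  have h2 := h.hcube
  nlinarith

lemma Lstep (t : ℝ) :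
    ENNReal.ofReal p1 * μ (Icc (1 - β*t) 1) +
      (ENNReal.ofReal p2 * (ENNReal.ofReal p1)^(m-1)) * μ (Icc (1/β - β^m * t) (1/β)) ≤
      μ (Icc (1/β - t) (1/β)) := by
  have hβ0 := h.hβ0
  have hne : β ≠ 0 := ne_of_gt hβ0
  have hm := h.hm
  have h1 : β * (1/β) = 1 := by field_simp
  have e := h.ev (Icc (1/β - t) (1/β)) measurableSet_Icc
  rw [pre0_Icc hβ0, pre1_Icc hβ0] at e
  have e1 : β * (1/β - t) = 1 - β*t := by rw [mul_sub, h1]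
  have e2 : β * (1/β - t) - β + 1 = gam β 0 - β*t := by
    rw [mul_sub, h1]
    unfold gam
    rw [pow_zero]
    ring
  have e3 : β * (1/β) - β + 1 = gam β 0 := by
    rw [h1]
    unfold gam
    rw [pow_zero]
    ring
  rw [e2, e3, e1, h1] at e
  have hch := h.chainL (m-1) 0 (by omega) (β*t)
  have hpowc : β^(m-1) * (β * t) = β^m * t := by
    rw [show β^(m-1) * (β*t) = (β^(m-1)*β)*t by ring, ← pow_succ]
    congr 2
    omega
  rw [hpowc] at hch
  calc ENNReal.ofReal p1 * μ (Icc (1 - β*t) 1) +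
      (ENNReal.ofReal p2 * (ENNReal.ofReal p1)^(m-1)) * μ (Icc (1/β - β^m * t) (1/β))
      = ENNReal.ofReal p1 * μ (Icc (1 - β*t) 1) +
        ENNReal.ofReal p2 * ((ENNReal.ofReal p1)^(m-1) * μ (Icc (1/β - β^m * t) (1/β))) := by ring
    _ ≤ ENNReal.ofReal p1 * μ (Icc (1 - β*t) 1) +
        ENNReal.ofReal p2 * μ (Icc (gam β 0 - β*t) (gam β 0)) := by gcongr
    _ = μ (Icc (1/β - t) (1/β)) := e.symm

lemma Lbound (hpp : p1 ≤ p2) : ∀ k : ℕ,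
    ((k : ENNReal) + 1) * (ENNReal.ofReal p1 * (ENNReal.ofReal p2 * (ENNReal.ofReal p1)^(m-1))^k) ≤
      μ (Icc (1/β - (1/β)^(m*k+1)) (1/β)) := by
  have hβ0 := h.hβ0
  have hne : β ≠ 0 := ne_of_gt hβ0
  have hm := h.hm
  have h1 : β * (1/β) = 1 := by field_simp
  have hAB : ENNReal.ofReal p2 * (ENNReal.ofReal p1)^(m-1) ≤ (ENNReal.ofReal p2)^m := by
    calc ENNReal.ofReal p2 * (ENNReal.ofReal p1)^(m-1)
        ≤ ENNReal.ofReal p2 * (ENNReal.ofReal p2)^(m-1) := by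
          have := ENNReal.ofReal_le_ofReal hpp
          gcongr
      _ = (ENNReal.ofReal p2)^(m-1+1) := by rw [pow_succ]; ring
      _ = (ENNReal.ofReal p2)^m := by
          have hmm : m - 1 + 1 = m := by omega
          rw [hmm]
  intro k
  induction k with
  | zero =>
    have hL := h.Lstep (1/β)
    have e0 : (1:ℝ) - β * (1/β) = 0 := by rw [h1]; ring
    rw [e0, h.measure_Icc01, mul_one] at hL
    have goalrw : (1/β : ℝ)^(m*0+1) = 1/β := by norm_num
    rw [goalrw]
    calc (((0 : ℕ) : ENNReal) + 1) * (ENNReal.ofReal p1 * (ENNReal.ofReal p2 * (ENNReal.ofReal p1)^(m-1))^0) = ENNReal.ofReal p1 := by simp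
      _ ≤ _ := le_trans (self_le_add_right _ _) hL
  | succ k ih =>
    have hL := h.Lstep ((1/β)^(m*(k+1)+1))
    have e1 : β * (1/β)^(m*(k+1)+1) = (1/β)^(m*(k+1)) := h.betapow _
    have e2 : β^m * (1/β)^(m*(k+1)+1) = (1/β)^(m*k+1) := by
      rw [show m*(k+1)+1 = (m*k+1)+m by ring]
      exact h.bm_pow _
    rw [e1, e2] at hL
    have hM := h.Mlow (m*(k+1))
    have hpowle : (ENNReal.ofReal p2 * (ENNReal.ofReal p1)^(m-1))^(k+1) ≤ (ENNReal.ofReal p2)^(m*(k+1)) := by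
      calc (ENNReal.ofReal p2 * (ENNReal.ofReal p1)^(m-1))^(k+1)
          ≤ ((ENNReal.ofReal p2)^m)^(k+1) := by
            gcongr
        _ = (ENNReal.ofReal p2)^(m*(k+1)) := by rw [← pow_mul]
    refine le_trans ?_ hL
    push_cast
    calc ((k : ENNReal) + 1 + 1) * (ENNReal.ofReal p1 * (ENNReal.ofReal p2 * (ENNReal.ofReal p1)^(m-1))^(k+1))
        = ENNReal.ofReal p1 * (ENNReal.ofReal p2 * (ENNReal.ofReal p1)^(m-1))^(k+1) +
          (ENNReal.ofReal p2 * (ENNReal.ofReal p1)^(m-1)) * (((k : ENNReal) + 1) * (ENNReal.ofReal p1 * (ENNReal.ofReal p2 * (ENNReal.ofReal p1)^(m-1))^k)) := by ring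
      _ ≤ ENNReal.ofReal p1 * (ENNReal.ofReal p2)^(m*(k+1)) +
          (ENNReal.ofReal p2 * (ENNReal.ofReal p1)^(m-1)) * μ (Icc (1/β - (1/β)^(m*k+1)) (1/β)) := by
            gcongr
      _ ≤ ENNReal.ofReal p1 * μ (Icc (1 - (1/β)^(m*(k+1))) 1) +
          (ENNReal.ofReal p2 * (ENNReal.ofReal p1)^(m-1)) * μ (Icc (1/β - (1/β)^(m*k+1)) (1/β)) := by
            gcongr

lemma Rdecay (k₀ : ℕ) (hk₀ : 3*(1/β)^(m*k₀+1) < β - 1 - 1/β) : ∀ j : ℕ,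
    μ (Ioc (1/β) (1/β + 3*(1/β)^(m*(k₀+j)+1))) ≤
      (ENNReal.ofReal p2 * (ENNReal.ofReal p1)^(m-1))^j := by
  haveI := h.prob
  have hβ0 := h.hβ0
  have hinv0 : (0:ℝ) < 1/β := by positivity
  have hinv1 : 1/β ≤ 1 := by rw [div_le_one hβ0]; linarith [h.hβ1]
  intro j
  induction j with
  | zero => rw [pow_zero]; exact prob_le_one
  | succ j ih =>
    have ht : (0:ℝ) < 3*(1/β)^(m*(k₀+(j+1))+1) := by positivity
    have e2 : β^m * (3*(1/β)^(m*(k₀+(j+1))+1)) = 3*(1/β)^(m*(k₀+j)+1) := by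
      rw [show m*(k₀+(j+1))+1 = (m*(k₀+j)+1)+m by ring]
      rw [show β^m*(3*(1/β)^((m*(k₀+j)+1)+m)) = 3*(β^m*(1/β)^((m*(k₀+j)+1)+m)) by ring]
      rw [h.bm_pow]
    have hcond : β^m * (3*(1/β)^(m*(k₀+(j+1))+1)) < β-1-1/β := by
      rw [e2]
      have hmono : (1/β)^(m*(k₀+j)+1) ≤ (1/β)^(m*k₀+1) := by
        apply pow_le_pow_of_le_one (le_of_lt hinv0) hinv1
        have : m*k₀ ≤ m*(k₀+j) := Nat.mul_le_mul_left m (by omega)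
        omega
      linarith
    have hr := h.Rrec (3*(1/β)^(m*(k₀+(j+1))+1)) ht hcond
    rw [e2] at hr
    calc μ (Ioc (1/β) (1/β + 3*(1/β)^(m*(k₀+(j+1))+1)))
        = (ENNReal.ofReal p2 * (ENNReal.ofReal p1)^(m-1)) *
            μ (Ioc (1/β) (1/β + 3*(1/β)^(m*(k₀+j)+1))) := hr
      _ ≤ (ENNReal.ofReal p2 * (ENNReal.ofReal p1)^(m-1)) *
            (ENNReal.ofReal p2 * (ENNReal.ofReal p1)^(m-1))^j := by gcongr
      _ = (ENNReal.ofReal p2 * (ENNReal.ofReal p1)^(m-1))^(j+1) := by rw [pow_succ]; ring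

lemma keylemma (hpp : p1 ≤ p2) :
    (⨆ (x : ℝ) (_ : x ∈ Set.Icc (0:ℝ) 1) (r : ℝ) (_ : 0 < r),
      μ (Metric.closedBall x (2 * r)) / μ (Metric.closedBall x r)) = ⊤ := by
  haveI := h.prob
  have hβ0 := h.hβ0
  have hβ1 := h.hβ1
  have hβ2 := h.hβ2
  have hm := h.hm
  have hε := h.heps
  have hq := h.hquad
  have hcu := h.hcube
  have h2m := h.htwo
  have hne : β ≠ 0 := ne_of_gt hβ0
  have hinv0 : (0:ℝ) < 1/β := by positivity
  have hinv1 : 1/β < 1 := (div_lt_one hβ0).2 hβ1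
  set T := (⨆ (x : ℝ) (_ : x ∈ Set.Icc (0:ℝ) 1) (r : ℝ) (_ : 0 < r),
      μ (Metric.closedBall x (2 * r)) / μ (Metric.closedBall x r)) with hT
  set A := ENNReal.ofReal p2 * (ENNReal.ofReal p1)^(m-1) with hA
  have hP1pos : ENNReal.ofReal p1 ≠ 0 := by
    simp only [ne_eq, ENNReal.ofReal_eq_zero, not_le]
    exact h.hp1
  have hP2pos : ENNReal.ofReal p2 ≠ 0 := by
    simp only [ne_eq, ENNReal.ofReal_eq_zero, not_le]
    exact h.hp2
  have hA0 : A ≠ 0 := mul_ne_zero hP2pos (pow_ne_zero _ hP1pos)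
  have hAtop : A ≠ ⊤ := ENNReal.mul_ne_top ENNReal.ofReal_ne_top
    (ENNReal.pow_ne_top ENNReal.ofReal_ne_top)
  obtain ⟨n₀, hn₀⟩ := exists_pow_lt_of_lt_one (show (0:ℝ) < (β-1-1/β)/3 by positivity) hinv1
  have hk₀ : 3*(1/β)^(m*n₀+1) < β - 1 - 1/β := by
    have h1 : (1/β)^(m*n₀+1) ≤ (1/β)^n₀ := by
      apply pow_le_pow_of_le_one (le_of_lt hinv0) (le_of_lt hinv1)
      have : n₀ ≤ m*n₀ := Nat.le_mul_of_pos_left n₀ (by omega)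
      omega
    have h2 : (1/β)^n₀ < (β-1-1/β)/3 := hn₀
    nlinarith
  have hdecay := h.Rdecay n₀ hk₀
  set c := ENNReal.ofReal p1 * A^(n₀+1) with hcdef
  have hc0 : c ≠ 0 := mul_ne_zero hP1pos (pow_ne_zero _ hA0)
  have hctop : c ≠ ⊤ := ENNReal.mul_ne_top ENNReal.ofReal_ne_top (ENNReal.pow_ne_top hAtop)
  have main : ∀ j : ℕ, ((n₀+j+3 : ℕ) : ENNReal) * c ≤ T := by
    intro j
    set k := n₀ + j + 1 with hkdef
    set t := (1/β)^(m*k+1) with htdef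
    have ht : 0 < t := by rw [htdef]; positivity
    have ht4 : t ≤ (1/β)^4 := by
      rw [htdef]
      apply pow_le_pow_of_le_one (le_of_lt hinv0) (le_of_lt hinv1)
      have h5 : m ≤ m * k := Nat.le_mul_of_pos_right m (by omega)
      omega
    set z := 1/β + (3/2)*t with hzdef
    have hz : z ∈ Set.Icc (0:ℝ) 1 := by
      constructor
      · rw [hzdef]; nlinarith
      · rw [hzdef]
        have hb85 : (8:ℝ)/5 ≤ β := by nlinarith
        have h14 : (1/β)^4 ≤ 1/4 := by
          have l2 : (1/β)^2 ≤ 1/2 := by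
            rw [div_pow, one_pow, div_le_div_iff₀ (by positivity) (by norm_num)]
            nlinarith
          calc (1/β)^4 = ((1/β)^2)^2 := by ring
            _ ≤ (1/2)^2 := by
                apply pow_le_pow_left₀ (by positivity) l2
            _ = 1/4 := by norm_num
        have hβinv : 1/β ≤ 5/8 := by
          rw [div_le_div_iff₀ hβ0 (by norm_num)]
          linarith
        nlinarith
    have hnum : ((k : ENNReal) + 1 + 1) * (ENNReal.ofReal p1 * A^(k+1)) ≤
        μ (Metric.closedBall z (2*t)) := by
      have hincl : Icc (1/β - (1/β)^(m*(k+1)+1)) (1/β) ⊆ Metric.closedBall z (2*t) := by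
        rw [Real.closedBall_eq_Icc]
        apply Icc_subset_Icc
        · have e : (1/β : ℝ)^(m*(k+1)+1) = t * (1/β)^m := by
            rw [htdef, ← pow_add]
            congr 1
            ring
          have hhalf : (1/β : ℝ)^m ≤ 1/2 := by
            rw [div_pow, one_pow, div_le_div_iff₀ (by positivity) (by norm_num)]
            linarith
          rw [hzdef, e]
          nlinarith
        · rw [hzdef]
          nlinarith
      have hLb := h.Lbound hpp (k+1)
      refine le_trans (le_of_eq ?_) (le_trans hLb (measure_mono hincl))
      push_cast
      ring
    have hexp : (1/β : ℝ)^(m*(n₀+(j+1))+1) = t := by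
      rw [htdef]
      congr 1
    have hden : μ (Metric.closedBall z t) ≤ A^(j+1) := by
      have hd := hdecay (j+1)
      rw [hexp] at hd
      refine le_trans (measure_mono ?_) hd
      rw [Real.closedBall_eq_Icc]
      intro y hy
      obtain ⟨hy1, hy2⟩ := hy
      rw [hzdef] at hy1 hy2
      constructor
      · linarith
      · linarith
    have hpos : (0:ENNReal) < ((k : ENNReal) + 1 + 1) * (ENNReal.ofReal p1 * A^(k+1)) := by
      apply ENNReal.mul_pos
      · simp
      · exact mul_ne_zero hP1pos (pow_ne_zero _ hA0)
    have hnum0 : μ (Metric.closedBall z (2*t)) ≠ 0 := (lt_of_lt_of_le hpos hnum).ne'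
    have hratio : ((n₀+j+3 : ℕ) : ENNReal) * c ≤
        μ (Metric.closedBall z (2*t)) / μ (Metric.closedBall z t) := by
      rw [ENNReal.le_div_iff_mul_le (Or.inr hnum0) (Or.inl (measure_ne_top μ _))]
      calc ((n₀+j+3:ℕ):ENNReal) * c * μ (Metric.closedBall z t)
          ≤ ((n₀+j+3:ℕ):ENNReal) * c * A^(j+1) := by gcongr
        _ = ((k : ENNReal) + 1 + 1) * (ENNReal.ofReal p1 * A^(k+1)) := by
            rw [hcdef, hkdef]
            have he : n₀+j+1+1 = (n₀+1)+(j+1) := by omega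
            rw [he, pow_add]
            push_cast
            ring
        _ ≤ μ (Metric.closedBall z (2*t)) := hnum
    refine le_trans hratio ?_
    rw [hT]
    exact le_iSup_of_le z (le_iSup_of_le hz (le_iSup_of_le t (le_iSup_of_le ht le_rfl)))
  by_contra hTne
  have hdiv : T / c ≠ ⊤ := (ENNReal.div_lt_top hTne hc0).ne
  obtain ⟨n, hn⟩ := ENNReal.exists_nat_gt hdiv
  have h2 : T < (n:ENNReal) * c := by
    rw [← ENNReal.div_lt_iff (Or.inl hc0) (Or.inl hctop)]
    exact hn
  have h3 : ((n:ℕ):ENNReal) * c ≤ ((n₀+n+3:ℕ):ENNReal) * c := by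
    gcongr
    exact_mod_cast (by omega : n ≤ n₀+n+3)
  exact absurd (lt_of_lt_of_le h2 (le_trans h3 (main n))) (lt_irrefl T)

end Setup

/-- For `m ≥ 3`, the self-similar measure `μ_p` is not doubling:
the doubling supremum over the support `[0,1]` is infinite. -/
theorem stmt_0 (m : ℕ) (hm : 3 ≤ m) (β : ℝ) (hβ1 : 1 < β) (hβ2 : β < 2)
    (hβ : β ^ m = ∑ j ∈ Finset.range m, β ^ j)
    (p1 p2 : ℝ) (hp1 : 0 < p1) (hp2 : 0 < p2) (hp : p1 + p2 = 1)
    (μ : Measure ℝ) [IsProbabilityMeasure μ]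
    (hμ : μ = ENNReal.ofReal p1 • μ.map (Smap β 0) + ENNReal.ofReal p2 • μ.map (Smap β 1)) :
    (⨆ (x : ℝ) (_ : x ∈ Set.Icc (0:ℝ) 1) (r : ℝ) (_ : 0 < r),
      μ (Metric.closedBall x (2 * r)) / μ (Metric.closedBall x r)) = ⊤ := by
  by_cases hpp : p1 ≤ p2
  · exact Setup.keylemma ⟨hm, hβ1, hβ2, hβ, hp1, hp2, hp, inferInstance, hμ⟩ hpp
  · push_neg at hpp
    have hβ0 : (0:ℝ) < β := by linarith
    have hne : β ≠ 0 := ne_of_gt hβ0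
    have hrm : Measurable (fun x : ℝ => 1 - x) := measurable_const.sub measurable_id
    set ν := μ.map (fun x : ℝ => 1 - x) with hν'
    haveI hprob : IsProbabilityMeasure ν := Measure.isProbabilityMeasure_map hrm.aemeasurable
    have c1 : (Smap β 0) ∘ (fun x : ℝ => 1 - x) = (fun x : ℝ => 1 - x) ∘ (Smap β 1) := by
      rw [smap0 β, smap1 β]
      funext x
      simp only [Function.comp_apply]
      field_simp
      try ring
    have c2 : (Smap β 1) ∘ (fun x : ℝ => 1 - x) = (fun x : ℝ => 1 - x) ∘ (Smap β 0) := by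
      rw [smap0 β, smap1 β]
      funext x
      simp only [Function.comp_apply]
      field_simp
      try ring
    have m0 : ν.map (Smap β 0) = (μ.map (Smap β 1)).map (fun x : ℝ => 1 - x) := by
      rw [hν', Measure.map_map (measurable_smap β 0) hrm,
        Measure.map_map hrm (measurable_smap β 1), c1]
    have m1 : ν.map (Smap β 1) = (μ.map (Smap β 0)).map (fun x : ℝ => 1 - x) := by
      rw [hν', Measure.map_map (measurable_smap β 1) hrm,
        Measure.map_map hrm (measurable_smap β 0), c2]
    have hνeq : ν = ENNReal.ofReal p2 • ν.map (Smap β 0) + ENNReal.ofReal p1 • ν.map (Smap β 1) := by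
      calc ν = μ.map (fun x : ℝ => 1 - x) := hν'
        _ = (ENNReal.ofReal p1 • μ.map (Smap β 0) +
              ENNReal.ofReal p2 • μ.map (Smap β 1)).map (fun x : ℝ => 1 - x) := by rw [← hμ]
        _ = (ENNReal.ofReal p1 • μ.map (Smap β 0)).map (fun x : ℝ => 1 - x) +
              (ENNReal.ofReal p2 • μ.map (Smap β 1)).map (fun x : ℝ => 1 - x) :=
            Measure.map_add _ _ hrm
        _ = ENNReal.ofReal p1 • (μ.map (Smap β 0)).map (fun x : ℝ => 1 - x) +
              ENNReal.ofReal p2 • (μ.map (Smap β 1)).map (fun x : ℝ => 1 - x) := by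
            rw [Measure.map_smul, Measure.map_smul]
        _ = ENNReal.ofReal p2 • ν.map (Smap β 0) + ENNReal.ofReal p1 • ν.map (Smap β 1) := by
            rw [m0, m1]
            exact add_comm _ _
    have hsetup : Setup m β p2 p1 ν := ⟨hm, hβ1, hβ2, hβ, hp2, hp1, by linarith, hprob, hνeq⟩
    have hsup := hsetup.keylemma (le_of_lt hpp)
    have hball : ∀ (x s : ℝ), ν (Metric.closedBall x s) = μ (Metric.closedBall (1-x) s) := by
      intro x s
      rw [hν', Measure.map_apply hrm measurableSet_closedBall]
      congr 1
      ext y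
      simp only [Set.mem_preimage, Metric.mem_closedBall, Real.dist_eq]
      rw [show (1:ℝ) - y - x = -(y - (1 - x)) by ring, abs_neg]
    rw [eq_top_iff, ← hsup]
    refine iSup_le fun x => iSup_le fun hx => iSup_le fun r => iSup_le fun hr => ?_
    rw [hball, hball]
    exact le_iSup_of_le (1-x) (le_iSup_of_le ⟨by linarith [hx.2], by linarith [hx.1]⟩
      (le_iSup_of_le r (le_iSup_of_le hr le_rfl)))

end
end

section
/- For every n ≥ 1, the distance between any two adjacent points of X_n belongs to β^{−n}·D; that is, for every j with 1 ≤ j ≤ #X_n − 1 there exists i ∈ {0,1,…,m} such that a_{n,j} − a_{n,j−1} = β^{−n}·d_i. -/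
open MeasureTheory

noncomputable section

/-- The scaled point set `Λ_n`. -/
def Lam (β : ℝ) : ℕ → Finset ℝ
  | 0 => {0}
  | n+1 => Lam β n ∪ (Lam β n).image (fun y => β^n + y)

section basic
variable {β : ℝ} {m : ℕ}

lemma dd_rec (β : ℝ) (j : ℕ) (hj : 1 ≤ j) : dd β (j+1) = β * dd β j - (β - 1) := by
  cases j with
  | zero => omega
  | succ k => rfl

lemma dd_closed (β : ℝ) (j : ℕ) :
    dd β (j+1) = (β - 1) * (β^j - ∑ i ∈ Finset.range j, β^i) := by
  induction j with
  | zero => simp [dd]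
  | succ j ih =>
    rw [dd_rec β (j+1) (by omega), ih]
    have h1 : ∑ i ∈ Finset.range (j+1), β^i = β * (∑ i ∈ Finset.range j, β^i) + 1 := by
      rw [Finset.sum_range_succ', Finset.mul_sum]
      simp [pow_succ, mul_comm]
    rw [h1]; ring


lemma dd_m_eq (hm : 1 ≤ m) (hβ0 : (0:ℝ) < β)
    (hβ : β ^ m = ∑ j ∈ Finset.range m, β ^ j) : dd β m = (β - 1)/β := by
  obtain ⟨k, rfl⟩ : ∃ k, m = k + 1 := ⟨m - 1, by omega⟩
  rw [dd_closed]
  have h1 : β * (β ^ k - ∑ i ∈ Finset.range k, β ^ i) = 1 := by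
    have h2 : ∑ i ∈ Finset.range (k+1), β^i = β * (∑ i ∈ Finset.range k, β^i) + 1 := by
      rw [Finset.sum_range_succ', Finset.mul_sum]
      simp [pow_succ, mul_comm]
    have := hβ
    rw [h2, pow_succ] at this
    nlinarith [this]
  field_simp
  nlinarith [h1]

lemma dd_pos (hm : 1 ≤ m) (hβ1 : 1 < β) (hβ2 : β < 2)
    (hβ : β ^ m = ∑ j ∈ Finset.range m, β ^ j) :
    ∀ j, j ≤ m → 0 < dd β j := by
  have hβ0 : (0:ℝ) < β := by linarith
  have hc : (0:ℝ) < (β - 1)/β := div_pos (by linarith) hβ0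
  have hc1 : (β - 1)/β < 1 := by rw [div_lt_one hβ0]; linarith
  have key : ∀ k j, j + k = m → (β - 1)/β ≤ dd β j := by
    intro k
    induction k with
    | zero => intro j hj; rw [show j = m by omega, dd_m_eq hm hβ0 hβ]
    | succ k ih =>
      intro j hj
      match j, hj with
      | 0, _ => simp [dd]; linarith
      | (j+1), hj =>
        have h2 := ih (j+2) (by omega)
        rw [dd_rec β (j+1) (by omega)] at h2
        rw [div_le_iff₀ hβ0] at h2 ⊢
        nlinarith
  intro j hj
  calc (0:ℝ) < (β-1)/β := hc
    _ ≤ dd β j := key (m - j) j (by omega)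

lemma M_lt_pow (hβ1 : 1 < β) (hβ2 : β < 2) (hm : 1 ≤ m)
    (hβ : β ^ m = ∑ j ∈ Finset.range m, β ^ j)
    {n : ℕ} (hn : n < m) : (∑ k ∈ Finset.range n, β^k) < β^n := by
  have h := dd_pos (m:=m) hm hβ1 hβ2 hβ (n+1) (by omega)
  rw [dd_closed] at h
  nlinarith

lemma stair (hβ0 : (0:ℝ) < β) (hβ : β ^ m = ∑ j ∈ Finset.range m, β ^ j)
    {l : ℕ} (hl : m ≤ l) : (∑ k ∈ Finset.Ico (l - m) l, β^k) = β^l := by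
  rw [Finset.sum_Ico_eq_sum_range]
  have h1 : l - (l - m) = m := by omega
  rw [h1]
  have : ∀ k, β ^ (l - m + k) = β^(l-m) * β^k := fun k => pow_add β _ k
  simp_rw [this, ← Finset.mul_sum, ← hβ, ← pow_add]
  congr 1; omega

lemma zero_mem_Lam (n : ℕ) : (0:ℝ) ∈ Lam β n := by
  induction n with
  | zero => simp [Lam]
  | succ n ih => simp only [Lam, Finset.mem_union]; exact Or.inl ih

lemma Lam_nonneg (hβ0 : (0:ℝ) < β) : ∀ n, ∀ x ∈ Lam β n, (0:ℝ) ≤ x := by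
  intro n
  induction n with
  | zero => intro x hx; simp [Lam] at hx; simp [hx]
  | succ n ih =>
    intro x hx
    simp only [Lam, Finset.mem_union, Finset.mem_image] at hx
    rcases hx with hx | ⟨y, hy, rfl⟩
    · exact ih x hx
    · have := ih y hy; positivity

lemma Lam_le_M (hβ0 : (0:ℝ) < β) : ∀ n, ∀ x ∈ Lam β n, x ≤ ∑ k ∈ Finset.range n, β^k := by
  intro n
  induction n with
  | zero => intro x hx; simp [Lam] at hx; simp [hx]
  | succ n ih =>
    intro x hx
    simp only [Lam, Finset.mem_union, Finset.mem_image] at hx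
    rw [Finset.sum_range_succ]
    have hp : (0:ℝ) < β^n := by positivity
    rcases hx with hx | ⟨y, hy, rfl⟩
    · have h1 := ih x hx
      have h2 : (0:ℝ) ≤ ∑ k ∈ Finset.range n, β^k - x + β^n := by linarith
      linarith
    · have := ih y hy; linarith

lemma Lam_mono (n : ℕ) : Lam β n ⊆ Lam β (n+1) := by
  intro x hx; simp only [Lam, Finset.mem_union]; exact Or.inl hx

lemma M_mem_Lam (n : ℕ) : (∑ k ∈ Finset.range n, β^k) ∈ Lam β n := by
  induction n with
  | zero => simp [Lam]
  | succ n ih =>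
    simp only [Lam, Finset.mem_union, Finset.mem_image]
    right
    exact ⟨_, ih, by rw [Finset.sum_range_succ]; ring⟩

lemma sum_mem_Lam : ∀ n, ∀ s : Finset ℕ, (∀ k ∈ s, k < n) → (∑ k ∈ s, β^k) ∈ Lam β n := by
  intro n
  induction n with
  | zero => intro s hs; have : s = ∅ := by
              ext k; simp; intro h; exact absurd (hs k h) (by omega)
            simp [this, Lam]
  | succ n ih =>
    intro s hs
    by_cases hn : n ∈ s
    · simp only [Lam, Finset.mem_union, Finset.mem_image]
      right
      refine ⟨∑ k ∈ s.erase n, β^k, ih _ (fun k hk => ?_), ?_⟩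
      · have := Finset.mem_erase.1 hk
        have := hs k this.2
        omega
      · rw [← Finset.add_sum_erase _ _ hn]
    · exact Lam_mono n (ih s (fun k hk => by have := hs k hk; have : k ≠ n := fun h => hn (h ▸ hk); omega))

lemma pow_mem_Lam (hβ0 : (0:ℝ) < β) (hβ : β ^ m = ∑ j ∈ Finset.range m, β ^ j)
    {n : ℕ} (hn : m ≤ n) : (β:ℝ)^n ∈ Lam β n := by
  rw [← stair hβ0 hβ hn]
  exact sum_mem_Lam n _ (fun k hk => (Finset.mem_Ico.1 hk).2)


lemma Big (hβ1 : 1 < β) (hβ2 : β < 2) (hm : 1 ≤ m)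
    (hβ : β ^ m = ∑ j ∈ Finset.range m, β ^ j) :
    ∀ l r x, 1 ≤ r → r ≤ m → r ≤ l → x ∈ Lam β l →
      (∑ k ∈ Finset.Ico (l - r) l, β^k) ≤ x →
      x - (∑ k ∈ Finset.Ico (l - r) l, β^k) ∈ Lam β l := by
  have hβ0 : (0:ℝ) < β := by linarith
  intro l
  induction l with
  | zero => intro r x h1 _ h3 _ _; omega
  | succ l ih =>
    intro r x hr1 hrm hrl hx hSx
    have hpl : (0:ℝ) < β^l := by positivity
    -- the staircase sum splits off the top term
    have htop : (∑ k ∈ Finset.Ico (l + 1 - r) (l+1), β^k)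
        = (∑ k ∈ Finset.Ico (l + 1 - r) l, β^k) + β^l := by
      rw [Finset.sum_Ico_succ_top (by omega)]
    have hS'nonneg : (0:ℝ) ≤ ∑ k ∈ Finset.Ico (l + 1 - r) l, β^k :=
      Finset.sum_nonneg (fun k _ => by positivity)
    have hxβ : β^l ≤ x := by
      calc β^l ≤ ∑ k ∈ Finset.Ico (l + 1 - r) (l+1), β^k := by rw [htop]; linarith
        _ ≤ x := hSx
    -- step A: x = β^l + y with y ∈ Lam β l
    obtain ⟨y, hy, rfl⟩ : ∃ y ∈ Lam β l, x = β^l + y := by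
      simp only [Lam, Finset.mem_union, Finset.mem_image] at hx
      rcases hx with hx | ⟨y, hy, rfl⟩
      · by_cases hlm : l < m
        · exact absurd (Lam_le_M hβ0 l x hx) (not_le.2 (lt_of_lt_of_le (M_lt_pow hβ1 hβ2 hm hβ hlm) hxβ))
        · have hml : m ≤ l := by omega
          have hst := stair (m:=m) hβ0 hβ hml
          have := ih m x (by omega) le_rfl hml hx (by rw [hst]; exact hxβ)
          rw [hst] at this
          exact ⟨x - β^l, this, by ring⟩
      · exact ⟨y, hy, rfl⟩
    rw [htop]
    by_cases hr : r = 1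
    · subst hr
      have : Finset.Ico (l + 1 - 1) l = ∅ := by
        rw [Finset.Ico_eq_empty_iff]; omega
      rw [this]
      simpa using Lam_mono l hy
    · have hr2 : 2 ≤ r := by omega
      have hI : Finset.Ico (l + 1 - r) l = Finset.Ico (l - (r-1)) l := by congr 1; omega
      have := ih (r-1) y (by omega) (by omega) (by omega) hy (by
        rw [← hI]; rw [htop] at hSx; linarith)
      rw [← hI] at this
      have heq : β ^ l + y - ((∑ k ∈ Finset.Ico (l + 1 - r) l, β ^ k) + β ^ l)
          = y - ∑ k ∈ Finset.Ico (l + 1 - r) l, β ^ k := by ring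
      rw [heq]
      exact Lam_mono l this

lemma overLam (hβ1 : 1 < β) (hβ2 : β < 2) (hm : 1 ≤ m)
    (hβ : β ^ m = ∑ j ∈ Finset.range m, β ^ j)
    {n : ℕ} {x : ℝ} (hx : x ∈ Lam β (n+1)) (hxβ : β^n ≤ x) :
    x - β^n ∈ Lam β n := by
  have hβ0 : (0:ℝ) < β := by linarith
  simp only [Lam, Finset.mem_union, Finset.mem_image] at hx
  rcases hx with hx | ⟨y, hy, rfl⟩
  · by_cases hlm : n < m
    · exact absurd (Lam_le_M hβ0 n x hx) (not_le.2 (lt_of_lt_of_le (M_lt_pow hβ1 hβ2 hm hβ hlm) hxβ))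
    · have hml : m ≤ n := by omega
      have hst := stair (m:=m) hβ0 hβ hml
      have := Big hβ1 hβ2 hm hβ n m x (by omega) le_rfl hml hx (by rw [hst]; exact hxβ)
      rwa [hst] at this
  · simpa using hy

lemma GapLam (hβ1 : 1 < β) (hβ2 : β < 2) (hm : 1 ≤ m)
    (hβ : β ^ m = ∑ j ∈ Finset.range m, β ^ j) :
    ∀ n, ∀ x ∈ Lam β n, ∀ y ∈ Lam β n, x < y →
      (∀ z ∈ Lam β n, z ≤ x ∨ y ≤ z) →
      ∃ i, 1 ≤ i ∧ i ≤ m ∧ y - x = dd β i / (β - 1) := by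
  have hβ0 : (0:ℝ) < β := by linarith
  intro n
  induction n with
  | zero =>
    intro x hx y hy hxy _
    simp [Lam] at hx hy
    subst hx; subst hy; exact absurd hxy (lt_irrefl 0)
  | succ n ih =>
    intro x hx y hy hxy hadj
    have hpl : (0:ℝ) < β^n := by positivity
    have hP : (β:ℝ)^n ∈ Lam β (n+1) := by
      simp only [Lam, Finset.mem_union, Finset.mem_image]
      exact Or.inr ⟨0, zero_mem_Lam n, by ring⟩
    rcases hadj _ hP with hPx | hyP
    · -- β^n ≤ x : both in shifted copy
      have hx' : x - β^n ∈ Lam β n := overLam hβ1 hβ2 hm hβ hx hPx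
      have hy' : y - β^n ∈ Lam β n := overLam hβ1 hβ2 hm hβ hy (le_trans hPx (le_of_lt hxy))
      obtain ⟨i, h1, h2, h3⟩ := ih (x - β^n) hx' (y - β^n) hy' (by linarith) (fun z hz => by
        have hz1 : β^n + z ∈ Lam β (n+1) := by
          simp only [Lam, Finset.mem_union, Finset.mem_image]
          exact Or.inr ⟨z, hz, rfl⟩
        rcases hadj _ hz1 with h | h
        · left; linarith
        · right; linarith)
      exact ⟨i, h1, h2, by linarith⟩
    · -- y ≤ β^n
      have hxP : x < β^n := lt_of_lt_of_le hxy hyP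
      have hxL : x ∈ Lam β n := by
        simp only [Lam, Finset.mem_union, Finset.mem_image] at hx
        rcases hx with hx | ⟨y', hy', rfl⟩
        · exact hx
        · exact absurd hxP (not_lt.2 (by have := Lam_nonneg hβ0 n y' hy'; linarith))
      by_cases hyL : y ∈ Lam β n
      · -- both in lower copy
        obtain ⟨i, h1, h2, h3⟩ := ih x hxL y hyL hxy (fun z hz => hadj z (Lam_mono n hz))
        exact ⟨i, h1, h2, h3⟩
      · -- y = β^n (junction)
        have hyP' : y = β^n := by
          simp only [Lam, Finset.mem_union, Finset.mem_image] at hy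
          rcases hy with hy | ⟨y', hy', rfl⟩
          · exact absurd hy hyL
          · have := Lam_nonneg hβ0 n y' hy'
            have : β^n ≤ β^n + y' := by linarith
            linarith [hyP]
        subst hyP'
        by_cases hnm : n < m
        · -- x = M n, gap = dd (n+1)/(β-1)
          have hM : (∑ k ∈ Finset.range n, β^k) ∈ Lam β (n+1) := Lam_mono n (M_mem_Lam n)
          have hMlt := M_lt_pow hβ1 hβ2 hm hβ hnm
          rcases hadj _ hM with h | h
          · have hxM := Lam_le_M hβ0 n x hxL
            have hxe : x = ∑ k ∈ Finset.range n, β^k := le_antisymm hxM h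
            refine ⟨n+1, by omega, by omega, ?_⟩
            rw [hxe, dd_closed, mul_comm, mul_div_assoc, div_self (by linarith), mul_one]
          · exact absurd h (not_le.2 hMlt)
        · -- β^n ∈ Lam β n : adjacency transfers
          have hPL : (β:ℝ)^n ∈ Lam β n := pow_mem_Lam hβ0 hβ (by omega)
          exact ih x hxL _ hPL hxy (fun z hz => hadj z (Lam_mono n hz))


lemma fin2 (i : Fin 2) : i = 0 ∨ i = 1 := by omega

lemma Sapply_cons {n : ℕ} (i : Fin 2) (J : Fin n → Fin 2) (x : ℝ) :
    Sapply β (Fin.cons i J) x = Smap β i (Sapply β J x) := by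
  have h : Sapply β (Fin.cons i J) x
      = Smap β ((Fin.cons i J : Fin (n+1) → Fin 2) 0)
        (Sapply β (fun k : Fin n => (Fin.cons i J : Fin (n+1) → Fin 2) k.succ) x) := rfl
  rw [h, Fin.cons_zero]
  have h2 : (fun k : Fin n => (Fin.cons i J : Fin (n+1) → Fin 2) k.succ) = J := by
    funext k; simp [Fin.cons_succ]
  rw [h2]

lemma image_Sapply (hβ1 : 1 < β) :
    ∀ n, (Finset.univ.image fun I : Fin n → Fin 2 => Sapply β I 0)
      = (Lam β n).image (fun y => (β-1)/β^n * y) := by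
  have hβ0 : (0:ℝ) < β := by linarith
  intro n
  induction n with
  | zero =>
    ext x
    simp only [Finset.mem_image, Finset.mem_univ, true_and, Lam]
    constructor
    · rintro ⟨I, rfl⟩; exact ⟨0, by simp, by simp [Sapply]⟩
    · rintro ⟨y, hy, rfl⟩
      simp only [Finset.mem_singleton] at hy
      exact ⟨Fin.elim0, by simp [Sapply, hy]⟩
  | succ n ih =>
    have hpn : (0:ℝ) < β^n := by positivity
    ext x
    simp only [Finset.mem_image, Finset.mem_univ, true_and]
    constructor
    · rintro ⟨I, rfl⟩
      have hmem : Sapply β (fun k => I k.succ) 0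
          ∈ (Finset.univ.image fun I : Fin n → Fin 2 => Sapply β I 0) := by
        exact Finset.mem_image.2 ⟨_, Finset.mem_univ _, rfl⟩
      rw [ih] at hmem
      obtain ⟨y, hy, hEq⟩ := Finset.mem_image.1 hmem
      have hun : Sapply β I 0 = Smap β (I 0) (Sapply β (fun k => I k.succ) 0) := rfl
      rcases fin2 (I 0) with h0 | h0 <;> rw [hun, h0, ← hEq]
      · refine ⟨y, Lam_mono n hy, ?_⟩
        show _ = Smap β 0 ((β-1)/β^n * y)
        simp only [Smap, ↓reduceIte]
        rw [pow_succ]; field_simp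
      · refine ⟨β^n + y, ?_, ?_⟩
        · simp only [Lam, Finset.mem_union, Finset.mem_image]
          exact Or.inr ⟨y, hy, rfl⟩
        · show _ = Smap β 1 ((β-1)/β^n * y)
          simp only [Smap, if_neg (by decide : (1 : Fin 2) ≠ 0)]
          rw [pow_succ]; field_simp; ring
    · rintro ⟨w, hw, rfl⟩
      simp only [Lam, Finset.mem_union, Finset.mem_image] at hw
      rcases hw with hw | ⟨y, hy, rfl⟩
      · have : (β-1)/β^n * w ∈ (Lam β n).image (fun y => (β-1)/β^n * y) :=
          Finset.mem_image.2 ⟨w, hw, rfl⟩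
        rw [← ih] at this
        obtain ⟨J, _, hJ⟩ := Finset.mem_image.1 this
        refine ⟨Fin.cons 0 J, ?_⟩
        rw [Sapply_cons, hJ]
        simp only [Smap, ↓reduceIte]
        rw [pow_succ]; field_simp
      · have : (β-1)/β^n * y ∈ (Lam β n).image (fun y => (β-1)/β^n * y) :=
          Finset.mem_image.2 ⟨y, hy, rfl⟩
        rw [← ih] at this
        obtain ⟨J, _, hJ⟩ := Finset.mem_image.1 this
        refine ⟨Fin.cons 1 J, ?_⟩
        rw [Sapply_cons, hJ]
        simp only [Smap, if_neg (by decide : (1 : Fin 2) ≠ 0)]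
        rw [pow_succ]; field_simp; ring

lemma AdjX (hm : 2 ≤ m) (hβ1 : 1 < β) (hβ2 : β < 2)
    (hβ : β ^ m = ∑ j ∈ Finset.range m, β ^ j)
    {n : ℕ} {x y : ℝ} (hx : x ∈ Xn β n) (hy : y ∈ Xn β n) (hxy : x < y)
    (hadj : ∀ z ∈ Xn β n, z ≤ x ∨ y ≤ z) :
    ∃ i ≤ m, y - x = (β ^ n)⁻¹ * dd β i := by
  have hβ0 : (0:ℝ) < β := by linarith
  have hb1 : (0:ℝ) < β - 1 := by linarith
  have hpn : (0:ℝ) < β^n := by positivity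
  set c : ℝ := (β-1)/β^n with hc
  have hc0 : 0 < c := by positivity
  set T : ℝ := β^n/(β-1) with hT
  have hφT : c * T = 1 := by rw [hc, hT]; field_simp
  have hXeq : ∀ w, w ∈ Xn β n ↔ (∃ w₀ ∈ Lam β n, w = c * w₀) ∨ w = 1 := by
    intro w
    rw [Xn, Finset.mem_union, image_Sapply hβ1 n, Finset.mem_singleton]
    simp only [Finset.mem_image]
    constructor
    · rintro (⟨w₀, hw₀, rfl⟩ | h)
      · exact Or.inl ⟨w₀, hw₀, rfl⟩
      · exact Or.inr h
    · rintro (⟨w₀, hw₀, rfl⟩ | h)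
      · exact Or.inl ⟨w₀, hw₀, rfl⟩
      · exact Or.inr h
  have hφmem : ∀ w₀ ∈ Lam β n, c * w₀ ∈ Xn β n := by
    intro w₀ hw₀; exact (hXeq _).2 (Or.inl ⟨w₀, hw₀, rfl⟩)
  have hMT : (∑ k ∈ Finset.range n, β^k) = (β^n - 1)/(β-1) := geom_sum_eq (by linarith) n
  have hMltT : (∑ k ∈ Finset.range n, β^k) < T := by
    rw [hMT, hT, div_lt_div_iff₀ hb1 hb1]
    nlinarith
  -- decompose x and y
  rcases (hXeq y).1 hy with ⟨y₀, hy₀, rfl⟩ | hy1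
  · -- y in Lam part
    have hy₀M := Lam_le_M hβ0 n y₀ hy₀
    rcases (hXeq x).1 hx with ⟨x₀, hx₀, rfl⟩ | hx1
    · have hx₀y₀ : x₀ < y₀ := by
        by_contra h
        exact absurd (mul_le_mul_of_nonneg_left (not_lt.1 h) (le_of_lt hc0)) (not_le.2 hxy)
      obtain ⟨i, h1, h2, h3⟩ := GapLam hβ1 hβ2 (by omega) hβ n x₀ hx₀ y₀ hy₀ hx₀y₀ (fun z hz => by
        rcases hadj _ (hφmem z hz) with h | h
        · exact Or.inl (le_of_mul_le_mul_left h hc0)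
        · exact Or.inr (le_of_mul_le_mul_left h hc0))
      refine ⟨i, h2, ?_⟩
      have : c * y₀ - c * x₀ = c * (y₀ - x₀) := by ring
      rw [this, h3, hc]
      field_simp
    · -- x = 1 = c * T > c * y₀ : contradiction
      exfalso
      have : y₀ < T := lt_of_le_of_lt hy₀M hMltT
      have : c * y₀ < c * T := by exact mul_lt_mul_of_pos_left this hc0
      rw [hφT] at this
      rw [hx1] at hxy
      linarith
  · -- y = 1, so x₀ = M n
    subst hy1
    rcases (hXeq x).1 hx with ⟨x₀, hx₀, rfl⟩ | hx1
    · have hMX : c * (∑ k ∈ Finset.range n, β^k) ∈ Xn β n := hφmem _ (M_mem_Lam n)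
      rcases hadj _ hMX with h | h
      · have hx₀M : x₀ = ∑ k ∈ Finset.range n, β^k :=
          le_antisymm (Lam_le_M hβ0 n x₀ hx₀) (le_of_mul_le_mul_left h hc0)
        refine ⟨0, by omega, ?_⟩
        rw [hx₀M, hMT]
        have hd0 : dd β 0 = 1 := rfl
        rw [hd0, hc]
        field_simp
        ring
      · exfalso
        have : c * (∑ k ∈ Finset.range n, β^k) < c * T := mul_lt_mul_of_pos_left hMltT hc0
        rw [hφT] at this
        linarith
    · exact absurd hx1 (by intro h; rw [h] at hxy; exact lt_irrefl 1 hxy)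

end basic

/-- adjacent points of `X_n` are at distance `β^{-n}·d_i` for some `0 ≤ i ≤ m`. -/
theorem stmt_2 (m : ℕ) (hm : 2 ≤ m) (β : ℝ) (hβ1 : 1 < β) (hβ2 : β < 2)
    (hβ : β ^ m = ∑ j ∈ Finset.range m, β ^ j)
    (n : ℕ) (hn : 1 ≤ n) (j : ℕ) (hj1 : 1 ≤ j) (hj2 : j ≤ (Xn β n).card - 1) :
    ∃ i ≤ m, pt β n j - pt β n (j - 1) = (β ^ n)⁻¹ * dd β i := by
  classical
  set l := (Xn β n).sort (· ≤ ·) with hl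
  have hlen : l.length = (Xn β n).card := Finset.length_sort _
  have hcard : 1 ≤ (Xn β n).card := Finset.card_pos.2 ⟨1, by simp [Xn]⟩
  have hjlt : j < l.length := by omega
  have hjlt' : j - 1 < l.length := by omega
  have hsorted : l.Pairwise (· < ·) := (Finset.sortedLT_sort _).pairwise
  have hsorted' : l.Pairwise (· ≤ ·) := Finset.pairwise_sort _ _
  set a := l.get ⟨j - 1, hjlt'⟩ with ha
  set b := l.get ⟨j, hjlt⟩ with hb
  have hpta : pt β n (j-1) = a := List.getD_eq_get l 0 ⟨j - 1, hjlt'⟩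
  have hptb : pt β n j = b := List.getD_eq_get l 0 ⟨j, hjlt⟩
  have hamem : a ∈ Xn β n := (Finset.mem_sort _).1 (l.get_mem _)
  have hbmem : b ∈ Xn β n := (Finset.mem_sort _).1 (l.get_mem _)
  have hab : a < b := hsorted.rel_get_of_lt (by simp [Fin.lt_def]; omega)
  have hadj : ∀ z ∈ Xn β n, z ≤ a ∨ b ≤ z := by
    intro z hz
    obtain ⟨k, hk⟩ := List.mem_iff_get.1 ((Finset.mem_sort (α := ℝ) (· ≤ ·)).2 hz)
    by_cases hkj : (k : ℕ) ≤ j - 1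
    · left
      rw [← hk]
      exact hsorted'.rel_get_of_le (by simp [Fin.le_def]; omega)
    · right
      rw [← hk]
      exact hsorted'.rel_get_of_le (by simp [Fin.le_def]; omega)
  obtain ⟨i, him, heq⟩ := AdjX hm hβ1 hβ2 hβ hamem hbmem hab hadj
  exact ⟨i, him, by rw [hpta, hptb, heq]⟩
end
end

section
/- For every n ≥ 1, the word T_n equals σ^n(d₀), where σ^n denotes the n-fold iterate of the substitution σ applied to the one-letter word d₀. -/
open MeasureTheory

noncomputable section

/-- `Tword β n = T_n`, the word `t_{n,1}⋯t_{n,#X_n-1}` with `t_{n,j} = β^n(a_{n,j} - a_{n,j-1})`. -/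
def Tword (β : ℝ) (n : ℕ) : List ℝ :=
  (List.range ((Xn β n).card - 1)).map fun j => β ^ n * (pt β n (j+1) - pt β n j)

namespace S4

def tau (m k : ℕ) : List ℕ :=
  if k = 0 then [1, 0] else if k = m then [1] else [1, k + 1]

def wrd (m : ℕ) : ℕ → ℕ → List ℕ
  | 0, k => [k]
  | n+1, k => (tau m k).flatMap (wrd m n)

lemma wrd_zero (m k : ℕ) : wrd m 0 k = [k] := rfl

lemma wrd0 (m : ℕ) (n : ℕ) : wrd m (n+1) 0 = wrd m n 1 ++ wrd m n 0 := by
  simp [wrd, tau]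

lemma wrdm (m : ℕ) (hm : m ≠ 0) (n : ℕ) : wrd m (n+1) m = wrd m n 1 := by
  simp [wrd, tau, hm]

lemma wrdi (m k : ℕ) (hk1 : 1 ≤ k) (hkm : k < m) (n : ℕ) :
    wrd m (n+1) k = wrd m n 1 ++ wrd m n (k+1) := by
  have h0 : k ≠ 0 := by omega
  have h1 : k ≠ m := by omega
  simp [wrd, tau, h0, h1]

lemma tau_mem_le {m k j : ℕ} (hm : 2 ≤ m) (hk : k ≤ m) (hj : j ∈ tau m k) : j ≤ m := by
  unfold tau at hj
  split at hj
  · simp at hj; omega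
  · split at hj
    · simp at hj; omega
    · simp at hj
      rcases hj with h | h <;> omega

lemma wrd_le {m : ℕ} (hm : 2 ≤ m) : ∀ {n k j : ℕ}, k ≤ m → j ∈ wrd m n k → j ≤ m := by
  intro n
  induction n with
  | zero => intro k j hk hj; simp [wrd] at hj; omega
  | succ n IH =>
    intro k j hk hj
    simp only [wrd, List.mem_flatMap] at hj
    obtain ⟨a, ha, hja⟩ := hj
    exact IH (tau_mem_le hm hk ha) hja


variable {m : ℕ} {β : ℝ}

lemma dd_zero : dd β 0 = 1 := rfl
lemma dd_one : dd β 1 = β - 1 := rfl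

lemma dd_succ {k : ℕ} (hk : 1 ≤ k) : dd β (k+1) = β * dd β k - (β - 1) := by
  obtain ⟨j, rfl⟩ : ∃ j, k = j + 1 := ⟨k - 1, by omega⟩
  rfl

lemma dd_closed (k : ℕ) : dd β (k+1) = β ^ k * (β - 2) + 1 := by
  induction k with
  | zero => simp [dd_one]; ring
  | succ k IH => rw [dd_succ (by omega), IH]; ring

section hyp
variable (hm : 2 ≤ m) (hβ1 : 1 < β) (hβ2 : β < 2)
  (hβ : β ^ m = ∑ j ∈ Finset.range m, β ^ j)

include hβ1 hβ in
lemma key : β ^ (m+1) = 2 * β ^ m - 1 := by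
  have hne : β - 1 ≠ 0 := by nlinarith
  rw [geom_sum_eq (by nlinarith)] at hβ
  have h2 : β ^ m * (β - 1) = β ^ m - 1 := by
    field_simp at hβ
    nlinarith [hβ]
  have hp : β ^ (m+1) = β ^ m * β := by ring
  nlinarith [h2, hp]

include hm hβ1 hβ in
lemma dd_m_mul : β * dd β m = β - 1 := by
  obtain ⟨j, rfl⟩ : ∃ j, m = j + 1 := ⟨m - 1, by omega⟩
  rw [dd_closed]
  have hk := key hβ1 hβ
  have : β ^ (j + 1 + 1) = β ^ j * β * β := by ring
  rw [this] at hk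
  have : β ^ (j+1) = β ^ j * β := by ring
  rw [this] at hk
  nlinarith [hk]

include hm hβ1 hβ hβ2 in
lemma dd_pos {k : ℕ} (hk : k ≤ m) : 0 < dd β k := by
  match k with
  | 0 => norm_num [dd_zero]
  | (j+1) =>
    rw [dd_closed]
    have hβm : β ^ m * (2 - β) = 1 := by
      have := key hβ1 hβ
      have h2 : β ^ (m+1) = β ^ m * β := by ring
      nlinarith [this]
    have hjm : β ^ j ≤ β ^ (m-1) := pow_le_pow_right₀ (le_of_lt hβ1) (by omega)
    have hmm : β ^ (m-1) * β = β ^ m := by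
      rw [← pow_succ]; congr 1; omega
    have hb0 : 0 < β := by linarith
    have : β ^ j * (2 - β) < 1 := by
      calc β ^ j * (2 - β) ≤ β ^ (m-1) * (2-β) := by nlinarith [pow_pos hb0 j]
      _ < β ^ m * (2-β) := by nlinarith [pow_pos hb0 (m-1)]
      _ = 1 := hβm
    nlinarith

include hβ1 hβ2 in
lemma dd_lt (k : ℕ) : dd β (k+1) < dd β k := by
  match k with
  | 0 => simp [dd_zero, dd_one]; linarith
  | (j+1) =>
    rw [dd_closed, dd_closed]
    have hb0 : (0:ℝ) < β := by linarith
    have := pow_pos hb0 j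
    have hp : β ^ (j+1) = β ^ j * β := by ring
    nlinarith [this, hp, mul_pos this (sub_pos.mpr hβ1)]

end hyp
end S4

namespace S4
variable {m : ℕ} {β : ℝ}

lemma sum_flatMap {α : Type*} (l : List α) (f : α → List ℝ) :
    (l.flatMap f).sum = (l.map fun a => (f a).sum).sum := by
  induction l with
  | nil => simp
  | cons a l IH => simp [List.flatMap_cons, IH]

section hyp
variable (hm : 2 ≤ m) (hβ1 : 1 < β) (hβ2 : β < 2)
  (hβ : β ^ m = ∑ j ∈ Finset.range m, β ^ j)

include hm hβ1 hβ in
lemma tau_sum {k : ℕ} (hk : k ≤ m) : ((tau m k).map (dd β)).sum = β * dd β k := by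
  rcases Nat.eq_zero_or_pos k with rfl | hk1
  · simp [tau, dd_zero, dd_one]
  rcases eq_or_lt_of_le hk with rfl | hkm
  · have h0 : k ≠ 0 := by omega
    simp [tau, h0, dd_one, dd_m_mul hm hβ1 hβ]
  · have h0 : k ≠ 0 := by omega
    have h1 : k ≠ m := by omega
    simp [tau, h0, h1, dd_one, dd_succ hk1]

include hm hβ1 hβ in
lemma wrd_sum : ∀ {n k : ℕ}, k ≤ m → ((wrd m n k).map (dd β)).sum = β ^ n * dd β k := by
  intro n
  induction n with
  | zero => intro k hk; simp [wrd_zero]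
  | succ n IH =>
    intro k hk
    show (((tau m k).flatMap (wrd m n)).map (dd β)).sum = _
    rw [List.map_flatMap, sum_flatMap]
    have : ((tau m k).map fun a => ((wrd m n a).map (dd β)).sum)
        = (tau m k).map fun a => β ^ n * dd β a := by
      apply List.map_congr_left
      intro a ha
      exact IH (tau_mem_le hm hk ha)
    rw [this]
    rw [List.sum_map_mul_left, tau_sum hm hβ1 hβ hk]
    ring

include hm hβ1 hβ2 hβ in
lemma wrd_letter_pos {n k : ℕ} (hk : k ≤ m) {x : ℝ}
    (hx : x ∈ (wrd m n k).map (dd β)) : 0 < x := by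
  simp only [List.mem_map] at hx
  obtain ⟨j, hj, rfl⟩ := hx
  exact dd_pos hm hβ1 hβ2 hβ (wrd_le hm hk hj)

end hyp
end S4
namespace S4

def pf (l : List ℝ) : Finset ℝ :=
  (Finset.range (l.length + 1)).image fun j => (l.take j).sum

lemma mem_pf {l : List ℝ} {s : ℝ} :
    s ∈ pf l ↔ ∃ j, j ≤ l.length ∧ (l.take j).sum = s := by
  simp [pf, Nat.lt_succ_iff]

lemma zero_mem_pf (l : List ℝ) : (0:ℝ) ∈ pf l :=
  mem_pf.mpr ⟨0, by simp⟩

lemma sum_mem_pf (l : List ℝ) : l.sum ∈ pf l :=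
  mem_pf.mpr ⟨l.length, by simp⟩

lemma pf_append (a b : List ℝ) :
    pf (a ++ b) = pf a ∪ (pf b).image (fun s => a.sum + s) := by
  ext x
  simp only [Finset.mem_union, Finset.mem_image, mem_pf]
  constructor
  · rintro ⟨j, hj, rfl⟩
    rw [List.length_append] at hj
    rcases le_or_gt j a.length with h | h
    · left
      refine ⟨j, h, ?_⟩
      rw [List.take_append]
      have h0 : j - a.length = 0 := by omega
      simp [h0]
    · right
      refine ⟨(b.take (j - a.length)).sum, ⟨j - a.length, by omega, rfl⟩, ?_⟩
      rw [List.take_append,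
        List.take_of_length_le (show a.length ≤ j by omega), List.sum_append]
  · rintro (⟨j, hj, rfl⟩ | ⟨s, ⟨j, hj, rfl⟩, rfl⟩)
    · refine ⟨j, by rw [List.length_append]; omega, ?_⟩
      rw [List.take_append]
      have h0 : j - a.length = 0 := by omega
      simp [h0]
    · refine ⟨a.length + j, by rw [List.length_append]; omega, ?_⟩
      rw [List.take_append,
        List.take_of_length_le (show a.length ≤ a.length + j by omega), List.sum_append,
        Nat.add_sub_cancel_left]

lemma pf_nonneg {l : List ℝ} (h : ∀ x ∈ l, 0 ≤ x) {s : ℝ} (hs : s ∈ pf l) : 0 ≤ s := by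
  obtain ⟨j, _, rfl⟩ := mem_pf.mp hs
  exact List.sum_nonneg fun x hx => h x (List.take_subset _ _ hx)

lemma pf_le_sum {l : List ℝ} (h : ∀ x ∈ l, 0 ≤ x) {s : ℝ} (hs : s ∈ pf l) : s ≤ l.sum := by
  obtain ⟨j, _, rfl⟩ := mem_pf.mp hs
  conv_rhs => rw [← List.take_append_drop j l]
  rw [List.sum_append]
  have : 0 ≤ (l.drop j).sum :=
    List.sum_nonneg fun x hx => h x (List.drop_subset _ _ hx)
  linarith

lemma pf_lt_sum {l : List ℝ} (h : ∀ x ∈ l, 0 ≤ x) {s : ℝ} (hs : s ∈ pf l)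
    (hne : s ≠ l.sum) : s < l.sum :=
  lt_of_le_of_ne (pf_le_sum h hs) hne

end S4
namespace S4
variable {m : ℕ} {β : ℝ}

section hyp
variable (hm : 2 ≤ m) (hβ1 : 1 < β) (hβ2 : β < 2)
  (hβ : β ^ m = ∑ j ∈ Finset.range m, β ^ j)

include hm hβ1 hβ2 hβ in
lemma lemI : ∀ n : ℕ, ∀ i < m, ∀ s ∈ pf ((wrd m (n:ℕ) (i+1)).map (dd β)),
    s ≠ β ^ n * dd β (i+1) → s ∈ pf ((wrd m n i).map (dd β)) := by
  intro n
  induction n with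
  | zero =>
    intro i him s hs hne
    rw [wrd_zero] at hs
    obtain ⟨j, hj, rfl⟩ := mem_pf.mp hs
    simp only [List.map_cons, List.map_nil, List.length_cons, List.length_nil] at hj
    interval_cases j
    · exact zero_mem_pf _
    · exfalso; apply hne; simp
  | succ n IH =>
    intro i him s hs hne
    have hi1m : i + 1 ≤ m := him
    rcases eq_or_lt_of_le hi1m with heq | hlt
    · -- i + 1 = m
      have hi1 : 1 ≤ i := by omega
      rw [heq, wrdm m (by omega)] at hs
      rw [wrdi m i hi1 (by omega), heq, List.map_append, pf_append]
      exact Finset.mem_union_left _ hs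
    · -- i + 1 < m
      rw [wrdi m (i+1) (by omega) hlt, List.map_append, pf_append] at hs
      have hc : ((wrd m n 1).map (dd β)).sum = β ^ n * dd β 1 :=
        wrd_sum hm hβ1 hβ (by omega)
      rcases Finset.mem_union.mp hs with h1 | h2
      · -- s in left part
        rcases Nat.eq_zero_or_pos i with rfl | hi1
        · rw [wrd0, List.map_append, pf_append]
          exact Finset.mem_union_left _ h1
        · rw [wrdi m i hi1 (by omega), List.map_append, pf_append]
          exact Finset.mem_union_left _ h1
      · obtain ⟨s', hs', rfl⟩ := Finset.mem_image.mp h2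
        have hdd : dd β (i+1+1) = β * dd β (i+1) - (β - 1) := dd_succ (by omega)
        have hne' : s' ≠ β ^ n * dd β (i+2) := by
          intro hcon
          apply hne
          rw [hc, hcon, dd_one, hdd]
          ring
        have hs'' : s' ∈ pf ((wrd m n (i+1)).map (dd β)) :=
          IH (i+1) hlt s' hs' hne'
        rcases Nat.eq_zero_or_pos i with rfl | hi1
        · -- i = 0 : need s' ∈ pf (W n 0)
          have hlt12 : s' < β ^ n * dd β 1 := by
            have h2m : (2:ℕ) ≤ m := hm
            have hle : s' ≤ ((wrd m n 2).map (dd β)).sum :=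
              pf_le_sum (fun x hx => le_of_lt (wrd_letter_pos hm hβ1 hβ2 hβ (by omega) hx)) hs'
            rw [wrd_sum hm hβ1 hβ (by omega)] at hle
            have : dd β 2 < dd β 1 := dd_lt hβ1 hβ2 1
            have hbp : (0:ℝ) < β ^ n := pow_pos (by linarith) n
            nlinarith
          have h0 : s' ∈ pf ((wrd m n 0).map (dd β)) :=
            IH 0 (by omega) s' hs'' (by intro hcon; rw [hcon] at hlt12; exact lt_irrefl _ hlt12)
          rw [wrd0, List.map_append, pf_append]
          apply Finset.mem_union_right
          exact Finset.mem_image.mpr ⟨s', h0, rfl⟩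
        · rw [wrdi m i hi1 (by omega), List.map_append, pf_append]
          apply Finset.mem_union_right
          exact Finset.mem_image.mpr ⟨s', hs'', rfl⟩

end hyp
end S4
namespace S4
variable {m : ℕ} {β : ℝ}

section hyp
variable (hm : 2 ≤ m) (hβ1 : 1 < β) (hβ2 : β < 2)
  (hβ : β ^ m = ∑ j ∈ Finset.range m, β ^ j)

include hm hβ1 hβ2 hβ in
lemma lemII : ∀ n : ℕ, ∀ i < m, ∀ s ∈ pf ((wrd m n i).map (dd β)),
    s < β ^ n * dd β (i+1) → s ∈ pf ((wrd m n (i+1)).map (dd β)) := by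
  intro n
  induction n with
  | zero =>
    intro i him s hs hlt
    rw [wrd_zero] at hs
    obtain ⟨j, hj, rfl⟩ := mem_pf.mp hs
    simp only [List.map_cons, List.map_nil, List.length_cons, List.length_nil] at hj
    interval_cases j
    · exact zero_mem_pf _
    · exfalso
      simp only [pow_zero, one_mul, List.take_of_length_le, List.sum_cons, List.sum_nil,
        List.take_succ_cons, List.take_zero] at hlt
      have : dd β (i+1) < dd β i := dd_lt hβ1 hβ2 i
      simp at hlt
      linarith
  | succ n IH =>
    intro i him s hs hlt
    have hc : ((wrd m n 1).map (dd β)).sum = β ^ n * dd β 1 :=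
      wrd_sum hm hβ1 hβ (by omega)
    have hbp : (0:ℝ) < β ^ n := pow_pos (by linarith) n
    rcases Nat.eq_zero_or_pos i with rfl | hi1
    · -- i = 0
      rw [wrd0, List.map_append, pf_append] at hs
      rw [wrdi m 1 le_rfl (by omega), List.map_append, pf_append]
      rcases Finset.mem_union.mp hs with h1 | h2
      · exact Finset.mem_union_left _ h1
      · obtain ⟨s', hs', rfl⟩ := Finset.mem_image.mp h2
        -- s' < β^n * dd 2
        have hs'lt : s' < β ^ n * dd β 2 := by
          rw [hc] at hlt
          have h2 : dd β 2 = β * dd β 1 - (β - 1) := dd_succ le_rfl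
          rw [pow_succ] at hlt
          rw [h2, dd_one] at *
          ring_nf at hlt ⊢
          linarith
        have h1' : s' ∈ pf ((wrd m n 1).map (dd β)) := by
          apply IH 0 (by omega) s' hs'
          have : dd β 2 ≤ dd β 1 := le_of_lt (dd_lt hβ1 hβ2 1)
          nlinarith
        have h2' : s' ∈ pf ((wrd m n 2).map (dd β)) := IH 1 (by omega) s' h1' hs'lt
        apply Finset.mem_union_right
        exact Finset.mem_image.mpr ⟨s', h2', by rw [hc]⟩
    · -- 1 ≤ i < m
      rw [wrdi m i hi1 him, List.map_append, pf_append] at hs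
      rcases eq_or_lt_of_le (show i + 1 ≤ m from him) with heq | hi2m
      · -- i + 1 = m : goal index m
        rw [heq, wrdm m (by omega)]
        rcases Finset.mem_union.mp hs with h1 | h2
        · exact h1
        · exfalso
          obtain ⟨s', hs', rfl⟩ := Finset.mem_image.mp h2
          have hs'0 : 0 ≤ s' :=
            pf_nonneg (fun x hx => le_of_lt (wrd_letter_pos hm hβ1 hβ2 hβ (by omega) hx)) hs'
          have hdm : β * dd β m = β - 1 := dd_m_mul hm hβ1 hβ
          rw [hc, heq] at hlt
          -- hlt : β^n * dd 1 + s' < β^(n+1) * dd m = β^n * (β * dd m) = β^n * (β-1)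
          have : β ^ (n+1) * dd β m = β ^ n * (β - 1) := by
            rw [pow_succ]
            nlinarith [hdm]
          rw [dd_one] at hlt
          nlinarith
      · -- i + 1 < m
        rw [wrdi m (i+1) (by omega) hi2m, List.map_append, pf_append]
        rcases Finset.mem_union.mp hs with h1 | h2
        · exact Finset.mem_union_left _ h1
        · obtain ⟨s', hs', rfl⟩ := Finset.mem_image.mp h2
          have hdd : dd β (i+2) = β * dd β (i+1) - (β - 1) := dd_succ (by omega)
          have hs'lt : s' < β ^ n * dd β (i+2) := by
            rw [hc, dd_one, pow_succ] at hlt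
            rw [hdd]
            ring_nf at hlt ⊢
            linarith
          have h2' : s' ∈ pf ((wrd m n (i+2)).map (dd β)) :=
            IH (i+1) hi2m s' hs' hs'lt
          apply Finset.mem_union_right
          exact Finset.mem_image.mpr ⟨s', h2', rfl⟩

end hyp
end S4
namespace S4
variable {m : ℕ} {β : ℝ}

def theta (β : ℝ) : ℕ → ℝ
  | 0 => 0
  | t+1 => (1 + theta β t) / β

def sval (β : ℝ) : List Bool → ℝ
  | [] => 0
  | b :: l => ((if b then 1 else 0) + sval β l) / β

lemma theta_zero : theta β 0 = 0 := rfl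
lemma theta_succ (t : ℕ) : theta β (t+1) = (1 + theta β t) / β := rfl
lemma sval_nil : sval β [] = 0 := rfl
lemma sval_true (l : List Bool) : sval β (true :: l) = (1 + sval β l) / β := by
  simp [sval]
lemma sval_false (l : List Bool) : sval β (false :: l) = sval β l / β := by
  simp [sval]

section hyp
variable (hm : 2 ≤ m) (hβ1 : 1 < β) (hβ2 : β < 2)
  (hβ : β ^ m = ∑ j ∈ Finset.range m, β ^ j)

include hβ1 in
lemma theta_nonneg (t : ℕ) : 0 ≤ theta β t := by
  induction t with
  | zero => simp [theta]
  | succ t IH => rw [theta_succ]; positivity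

include hβ1 in
lemma theta_pos (t : ℕ) : 0 < theta β (t+1) := by
  have := theta_nonneg hβ1 (β := β) t
  have hb : (0:ℝ) < β := by linarith
  rw [theta_succ]
  positivity

include hβ1 in
lemma theta_mono {s t : ℕ} (h : s < t) : theta β s < theta β t := by
  have hb : (0:ℝ) < β := by linarith
  have step : ∀ u : ℕ, theta β u < theta β (u+1) := by
    intro u
    induction u with
    | zero => simpa [theta_zero] using theta_pos hβ1 0
    | succ u IH =>
      have e1 : theta β (u+1) * β = 1 + theta β u := by
        rw [theta_succ]; field_simp
      rw [theta_succ (u+1), lt_div_iff₀ hb]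
      linarith [IH, e1]
  exact strictMono_nat_of_lt_succ step h

include hβ1 in
lemma theta_pow (t : ℕ) : β ^ t * theta β t = ∑ j ∈ Finset.range t, β ^ j := by
  have hb : (0:ℝ) < β := by linarith
  induction t with
  | zero => simp [theta_zero]
  | succ t IH =>
    rw [theta_succ, Finset.sum_range_succ, ← IH]
    field_simp
    ring

include hβ1 hβ in
lemma theta_m : theta β m = 1 := by
  have hb : (0:ℝ) < β ^ m := pow_pos (by linarith) m
  have h := theta_pow hβ1 (β := β) m
  rw [← hβ] at h
  have h2 : β ^ m * theta β m = β ^ m * 1 := by rw [h, mul_one]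
  exact mul_left_cancel₀ (ne_of_gt hb) h2

include hβ1 hβ2 in
lemma theta_lt_inv (t : ℕ) : theta β t < 1 / (β - 1) := by
  have hb : (0:ℝ) < β := by linarith
  have hb1 : (0:ℝ) < β - 1 := by linarith
  induction t with
  | zero => rw [theta_zero]; positivity
  | succ t IH =>
    rw [theta_succ, div_lt_div_iff₀ hb hb1]
    rw [lt_div_iff₀ hb1] at IH
    nlinarith [IH]

include hβ1 in
lemma sval_nonneg (l : List Bool) : 0 ≤ sval β l := by
  have hb : (0:ℝ) < β := by linarith
  induction l with
  | nil => simp [sval_nil]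
  | cons b l IH =>
    cases b
    · rw [sval_false]; positivity
    · rw [sval_true]; positivity

include hβ1 in
lemma sval_le_theta (l : List Bool) : sval β l ≤ theta β l.length := by
  have hb : (0:ℝ) < β := by linarith
  induction l with
  | nil => simp [sval_nil, theta_zero]
  | cons b l IH =>
    have h0 : 0 ≤ sval β l := sval_nonneg hβ1 l
    cases b
    · rw [sval_false, List.length_cons, theta_succ]
      exact div_le_div_of_nonneg_right (by linarith) hb.le
    · rw [sval_true, List.length_cons, theta_succ]
      exact div_le_div_of_nonneg_right (by linarith) hb.le

include hβ1 hβ2 hβ in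
lemma subrep : ∀ n : ℕ, ∀ l : List Bool, l.length = n → ∀ t, t ≤ m →
    theta β t ≤ sval β l →
    ∃ l' : List Bool, l'.length = n ∧ sval β l' = sval β l - theta β t := by
  intro n
  induction n using Nat.strong_induction_on with
  | _ n IHn =>
    intro l hl t htm ht
    have hb : (0:ℝ) < β := by linarith
    match t with
    | 0 => exact ⟨l, hl, by simp [theta_zero]⟩
    | (u+1) =>
      match l with
      | [] =>
        exfalso
        have := theta_pos hβ1 (β := β) u
        rw [sval_nil] at ht
        linarith
      | (b :: l₀) =>
        have hlen : l₀.length = n - 1 := by simp at hl; omega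
        have hn1 : n - 1 < n := by simp at hl; omega
        cases b with
        | true =>
          have h1 : theta β u ≤ sval β l₀ := by
            rw [sval_true, theta_succ, div_le_div_iff₀ hb hb] at ht
            have := le_of_mul_le_mul_right ht hb
            linarith
          obtain ⟨l₀', hlen', hval'⟩ := IHn (n-1) hn1 l₀ hlen u (by omega) h1
          refine ⟨false :: l₀', by simp [hlen']; omega, ?_⟩
          rw [sval_false, sval_true, theta_succ, hval']
          ring
        | false =>
          have h1 : 1 + theta β u ≤ sval β l₀ := by
            rw [sval_false, theta_succ, div_le_div_iff₀ hb hb] at ht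
            exact le_of_mul_le_mul_right ht hb
          have h2 : theta β m ≤ sval β l₀ := by
            have := theta_nonneg hβ1 (β := β) u
            rw [theta_m hβ1 hβ]
            linarith
          obtain ⟨l₀', hlen', hval'⟩ := IHn (n-1) hn1 l₀ hlen m le_rfl h2
          have h3 : theta β u ≤ sval β l₀' := by
            rw [hval', theta_m hβ1 hβ]
            linarith
          obtain ⟨l₀'', hlen'', hval''⟩ := IHn (n-1) hn1 l₀' hlen' u (by omega) h3
          refine ⟨false :: l₀'', by simp [hlen'']; omega, ?_⟩
          rw [sval_false, sval_false, theta_succ, hval'', hval', theta_m hβ1 hβ]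
          ring

end hyp
end S4

namespace S4
variable {m : ℕ} {β : ℝ}

lemma sapply_zero (I : Fin 0 → Fin 2) (x : ℝ) : Sapply β I x = x := rfl

lemma sapply_succ {n : ℕ} (I : Fin (n+1) → Fin 2) (x : ℝ) :
    Sapply β I x = Smap β (I 0) (Sapply β (fun k => I k.succ) x) := rfl

lemma sapply_cons {n : ℕ} (i : Fin 2) (J : Fin n → Fin 2) (x : ℝ) :
    Sapply β (Fin.cons i J) x = Smap β i (Sapply β J x) := by
  rw [sapply_succ, Fin.cons_zero]
  simp only [Fin.cons_succ]

section hyp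
variable (hm : 2 ≤ m) (hβ1 : 1 < β) (hβ2 : β < 2)
  (hβ : β ^ m = ∑ j ∈ Finset.range m, β ^ j)

include hβ1 in
lemma lemA : ∀ (n : ℕ) (I : Fin n → Fin 2),
    ∃ l : List Bool, l.length = n ∧ Sapply β I 0 = (β - 1) * sval β l := by
  intro n
  have hb : (0:ℝ) < β := by linarith
  induction n with
  | zero => exact fun I => ⟨[], rfl, by rw [sapply_zero, sval_nil]; ring⟩
  | succ n IH =>
    intro I
    obtain ⟨l, hlen, hval⟩ := IH (fun k => I k.succ)
    rcases Fin.exists_fin_two.mp ⟨I 0, rfl⟩ with h0 | h0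
    all_goals rw [sapply_succ, hval]
    · refine ⟨false :: l, by simp [hlen], ?_⟩
      rw [h0, sval_false]
      simp only [Smap, if_pos rfl, if_true]
      field_simp
    · refine ⟨true :: l, by simp [hlen], ?_⟩
      rw [h0, sval_true]
      have h1 : (1 : Fin 2) ≠ 0 := by decide
      simp only [Smap, if_neg h1]
      field_simp
      ring

include hβ1 in
lemma lemB : ∀ (l : List Bool),
    ∃ I : Fin l.length → Fin 2, Sapply β I 0 = (β - 1) * sval β l := by
  have hb : (0:ℝ) < β := by linarith
  intro l
  induction l with
  | nil => exact ⟨fun i => 0, by rw [sapply_zero, sval_nil]; ring⟩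
  | cons b l IH =>
    obtain ⟨J, hJ⟩ := IH
    refine ⟨Fin.cons (if b then 1 else 0) J, ?_⟩
    rw [sapply_cons, hJ]
    cases b
    · simp only [if_false, Smap, Bool.false_eq_true, if_pos rfl, if_true, sval_false]
      field_simp
    · have h1 : (1 : Fin 2) ≠ 0 := by decide
      simp only [if_true, Smap, if_neg h1, sval_true]
      field_simp
      ring

include hβ1 hβ2 in
lemma sapply_lt_one {n : ℕ} (I : Fin n → Fin 2) : Sapply β I 0 < 1 := by
  obtain ⟨l, hlen, hval⟩ := lemA hβ1 n I
  have h1 : sval β l < 1 / (β - 1) := lt_of_le_of_lt (sval_le_theta hβ1 l) (theta_lt_inv hβ1 hβ2 _)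
  have hb1 : (0:ℝ) < β - 1 := by linarith
  rw [hval]
  rw [lt_div_iff₀ hb1] at h1
  nlinarith [h1]

end hyp
end S4
namespace S4
variable {m : ℕ} {β : ℝ}

lemma mem_Xn_iff {n : ℕ} {x : ℝ} :
    x ∈ Xn β n ↔ (∃ I : Fin n → Fin 2, Sapply β I 0 = x) ∨ x = 1 := by
  simp [Xn, or_comm]

section hyp
variable (hm : 2 ≤ m) (hβ1 : 1 < β) (hβ2 : β < 2)
  (hβ : β ^ m = ∑ j ∈ Finset.range m, β ^ j)

include hβ1 in
lemma lemB' (n : ℕ) (l : List Bool) (hl : l.length = n) :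
    ∃ I : Fin n → Fin 2, Sapply β I 0 = (β - 1) * sval β l := by
  subst hl
  exact lemB hβ1 l

include hβ1 hβ2 in
lemma mem_Y_iff {n : ℕ} {y : ℝ} :
    (∃ J : Fin n → Fin 2, Sapply β J 0 = y) ↔ (y ∈ Xn β n ∧ y ≠ 1) := by
  constructor
  · rintro ⟨J, rfl⟩
    exact ⟨mem_Xn_iff.mpr (Or.inl ⟨J, rfl⟩), ne_of_lt (sapply_lt_one hβ1 hβ2 J)⟩
  · rintro ⟨hy, hne⟩
    rcases mem_Xn_iff.mp hy with h | h
    · exact h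
    · exact absurd h hne

include hm hβ1 hβ2 hβ in
lemma lemIII {n : ℕ}
    (hPhi : Xn β n = (pf ((wrd m n 0).map (dd β))).image (fun s => s * (β ^ n)⁻¹))
    {s : ℝ} (hs : s ∈ pf ((wrd m n 0).map (dd β)))
    (hge : β ^ n * (β - 1) ≤ s) (hne : s ≠ β ^ n) :
    s - β ^ n * (β - 1) ∈ pf ((wrd m n 0).map (dd β)) := by
  have hb : (0:ℝ) < β := by linarith
  have hbn : (0:ℝ) < β ^ n := pow_pos hb n
  have hb1 : (0:ℝ) < β - 1 := by linarith
  have hx : s * (β ^ n)⁻¹ ∈ Xn β n := by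
    rw [hPhi]
    exact Finset.mem_image.mpr ⟨s, hs, rfl⟩
  rcases mem_Xn_iff.mp hx with ⟨I, hI⟩ | h1
  · obtain ⟨l, hlen, hval⟩ := lemA hβ1 n I
    rw [hval] at hI
    have hsval : theta β m ≤ sval β l := by
      rw [theta_m hβ1 hβ]
      have h2 : (β - 1) * 1 ≤ (β - 1) * sval β l := by
        rw [mul_one, hI, ← div_eq_mul_inv, le_div_iff₀ hbn]
        nlinarith [hge]
      exact le_of_mul_le_mul_left h2 hb1
    obtain ⟨l', hlen', hval'⟩ := subrep hβ1 hβ2 hβ n l hlen m le_rfl hsval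
    obtain ⟨I', hI'⟩ := lemB' hβ1 n l' hlen'
    have hXmem : (β - 1) * sval β l' ∈ Xn β n := mem_Xn_iff.mpr (Or.inl ⟨I', hI'⟩)
    rw [hPhi] at hXmem
    obtain ⟨s₂, hs₂, hs₂eq⟩ := Finset.mem_image.mp hXmem
    have : s₂ = s - β ^ n * (β - 1) := by
      have hv : (β - 1) * sval β l' = s * (β ^ n)⁻¹ - (β - 1) := by
        rw [hval', theta_m hβ1 hβ, ← hI]
        ring
      rw [hv] at hs₂eq
      field_simp at hs₂eq
      linarith [hs₂eq]
    rwa [this] at hs₂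
  · exfalso
    apply hne
    field_simp at h1
    linarith [h1]

include hm hβ1 hβ2 hβ in
lemma keyId {n : ℕ}
    (hPhi : Xn β n = (pf ((wrd m n 0).map (dd β))).image (fun s => s * (β ^ n)⁻¹)) :
    pf ((wrd m (n+1) 0).map (dd β)) =
      ((pf ((wrd m n 0).map (dd β))) \ {β ^ n}) ∪
        (pf ((wrd m n 0).map (dd β))).image (fun s => β ^ n * (β - 1) + s) := by
  have hb : (0:ℝ) < β := by linarith
  have hbn : (0:ℝ) < β ^ n := pow_pos hb n
  have hc : ((wrd m n 1).map (dd β)).sum = β ^ n * (β - 1) := by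
    rw [wrd_sum hm hβ1 hβ (by omega), dd_one]
  have hw : ((wrd m n 0).map (dd β)).sum = β ^ n := by
    rw [wrd_sum hm hβ1 hβ (by omega), dd_zero, mul_one]
  rw [wrd0, List.map_append, pf_append, hc]
  ext x
  simp only [Finset.mem_union, Finset.mem_sdiff, Finset.mem_image, Finset.mem_singleton]
  constructor
  · rintro (h1 | h2)
    · rcases eq_or_ne x (β ^ n * (β - 1)) with rfl | hxne
      · right
        exact ⟨0, zero_mem_pf _, by ring⟩
      · left
        have hx0 : x ∈ pf ((wrd m n 0).map (dd β)) := by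
          apply lemI hm hβ1 hβ2 hβ n 0 (by omega) x h1
          rw [dd_one]
          exact hxne
        refine ⟨hx0, ?_⟩
        have hlt : x < β ^ n * (β - 1) := by
          rw [← hc]
          exact pf_lt_sum
            (fun z hz => le_of_lt (wrd_letter_pos hm hβ1 hβ2 hβ (by omega) hz)) h1
            (by rw [hc]; exact hxne)
        intro hcon
        rw [hcon] at hlt
        nlinarith [hlt, hbn]
    · obtain ⟨s, hs', rfl⟩ := h2
      exact Or.inr ⟨s, hs', rfl⟩
  · rintro (⟨hx, hxne⟩ | ⟨s, hs', rfl⟩)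
    · rcases lt_or_ge x (β ^ n * (β - 1)) with hlt | hge
      · left
        apply lemII hm hβ1 hβ2 hβ n 0 (by omega) x hx
        rw [dd_one]
        exact hlt
      · right
        refine ⟨x - β ^ n * (β - 1), lemIII hm hβ1 hβ2 hβ hPhi hx hge hxne, by ring⟩
    · exact Or.inr ⟨s, hs', rfl⟩

end hyp
end S4
namespace S4
variable {m : ℕ} {β : ℝ}

section hyp
variable (hm : 2 ≤ m) (hβ1 : 1 < β) (hβ2 : β < 2)
  (hβ : β ^ m = ∑ j ∈ Finset.range m, β ^ j)

include hm hβ1 hβ2 hβ in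
lemma mainPhi (n : ℕ) :
    Xn β n = (pf ((wrd m n 0).map (dd β))).image (fun s => s * (β ^ n)⁻¹) := by
  have hb : (0:ℝ) < β := by linarith
  induction n with
  | zero =>
    ext x
    rw [mem_Xn_iff]
    simp only [pow_zero, inv_one, mul_one, Finset.mem_image]
    constructor
    · rintro (⟨I, rfl⟩ | rfl)
      · exact ⟨0, zero_mem_pf _, (sapply_zero I 0).symm⟩
      · refine ⟨1, ?_, rfl⟩
        rw [wrd_zero]
        refine mem_pf.mpr ⟨1, by simp, ?_⟩
        simp [dd_zero]
    · rintro ⟨s, hs, rfl⟩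
      rw [wrd_zero] at hs
      obtain ⟨j, hj, rfl⟩ := mem_pf.mp hs
      simp only [List.map_cons, List.map_nil, List.length_cons, List.length_nil] at hj
      interval_cases j
      · exact Or.inl ⟨Fin.elim0, rfl⟩
      · right; simp [dd_zero]
  | succ n IH =>
    have hbn : (0:ℝ) < β ^ n := pow_pos hb n
    have hbn1 : (0:ℝ) < β ^ (n+1) := pow_pos hb (n+1)
    have hw : ((wrd m n 0).map (dd β)).sum = β ^ n := by
      rw [wrd_sum hm hβ1 hβ (by omega), dd_zero, mul_one]
    ext x
    rw [mem_Xn_iff, keyId hm hβ1 hβ2 hβ IH]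
    constructor
    · rintro (⟨I, rfl⟩ | rfl)
      · -- Sapply I 0 with I : Fin (n+1) → Fin 2
        rw [sapply_succ]
        set y := Sapply β (fun k => I k.succ) 0 with hy
        have hymem : y ∈ Xn β n ∧ y ≠ 1 := mem_Y_iff hβ1 hβ2 |>.mp ⟨_, rfl⟩
        obtain ⟨hyXn, hyne⟩ := hymem
        rw [IH] at hyXn
        obtain ⟨s, hs, hseq⟩ := Finset.mem_image.mp hyXn
        have hsne : s ≠ β ^ n := by
          intro hcon
          apply hyne
          rw [← hseq, hcon]
          field_simp
        rcases Fin.exists_fin_two.mp ⟨I 0, rfl⟩ with h0 | h0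
        · rw [h0]
          apply Finset.mem_image.mpr
          refine ⟨s, Finset.mem_union_left _ (Finset.mem_sdiff.mpr ⟨hs, by simpa using hsne⟩), ?_⟩
          rw [← hseq]
          simp only [Smap, if_pos rfl, if_true]
          rw [pow_succ]
          field_simp
        · rw [h0]
          apply Finset.mem_image.mpr
          refine ⟨β ^ n * (β - 1) + s,
            Finset.mem_union_right _ (Finset.mem_image.mpr ⟨s, hs, rfl⟩), ?_⟩
          rw [← hseq]
          have h1 : (1 : Fin 2) ≠ 0 := by decide
          simp only [Smap, if_neg h1]
          rw [pow_succ]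
          field_simp
          ring
      · -- x = 1
        apply Finset.mem_image.mpr
        refine ⟨β ^ n * (β - 1) + β ^ n,
          Finset.mem_union_right _ (Finset.mem_image.mpr ⟨β ^ n, hw ▸ sum_mem_pf _, rfl⟩), ?_⟩
        rw [pow_succ]
        field_simp
        ring
    · intro hx
      obtain ⟨s, hs, rfl⟩ := Finset.mem_image.mp hx
      rcases Finset.mem_union.mp hs with h1 | h2
      · obtain ⟨hsp, hsne⟩ := Finset.mem_sdiff.mp h1
        left
        have hymem : s * (β ^ n)⁻¹ ∈ Xn β n ∧ s * (β ^ n)⁻¹ ≠ 1 := by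
          constructor
          · rw [IH]; exact Finset.mem_image.mpr ⟨s, hsp, rfl⟩
          · intro hcon
            apply hsne
            rw [Finset.mem_singleton]
            field_simp at hcon
            linarith [hcon]
        obtain ⟨J, hJ⟩ := (mem_Y_iff hβ1 hβ2).mpr hymem
        refine ⟨Fin.cons 0 J, ?_⟩
        rw [sapply_cons, hJ]
        simp only [Smap, if_pos rfl, if_true]
        rw [pow_succ]
        field_simp
      · obtain ⟨s', hs', rfl⟩ := Finset.mem_image.mp h2
        rcases eq_or_ne s' (β ^ n) with rfl | hne
        · right
          rw [pow_succ]
          field_simp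
          ring
        · left
          have hymem : s' * (β ^ n)⁻¹ ∈ Xn β n ∧ s' * (β ^ n)⁻¹ ≠ 1 := by
            constructor
            · rw [IH]; exact Finset.mem_image.mpr ⟨s', hs', rfl⟩
            · intro hcon
              apply hne
              field_simp at hcon
              linarith [hcon]
          obtain ⟨J, hJ⟩ := (mem_Y_iff hβ1 hβ2).mpr hymem
          refine ⟨Fin.cons 1 J, ?_⟩
          rw [sapply_cons, hJ]
          have h1 : (1 : Fin 2) ≠ 0 := by decide
          simp only [Smap, if_neg h1]
          rw [pow_succ]
          field_simp
          ring

end hyp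
end S4
namespace S4
variable {m : ℕ} {β : ℝ}

lemma flatMap_congr {α γ : Type*} {l : List α} {f g : α → List γ}
    (h : ∀ a ∈ l, f a = g a) : l.flatMap f = l.flatMap g := by
  induction l with
  | nil => rfl
  | cons a l IH =>
    rw [List.flatMap_cons, List.flatMap_cons, h a (by simp), IH (fun a ha => h a (by simp [ha]))]

lemma sum_take_lt {l : List ℝ} (h : ∀ x ∈ l, 0 < x) {i j : ℕ} (hij : i < j)
    (hj : j ≤ l.length) : (l.take i).sum < (l.take j).sum := by
  have hdec : l.take j = l.take i ++ (l.take j).drop i := by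
    conv_lhs => rw [← List.take_append_drop i (l.take j)]
    rw [List.take_take, min_eq_left (le_of_lt hij)]
  rw [hdec, List.sum_append]
  have hne : (l.take j).drop i ≠ [] := by
    apply List.ne_nil_of_length_pos
    rw [List.length_drop, List.length_take]
    omega
  have hpos : 0 < ((l.take j).drop i).sum := by
    apply List.sum_pos _ _ hne
    intro x hx
    exact h x (List.take_subset _ _ (List.drop_subset _ _ hx))
  linarith

section hyp
variable (hm : 2 ≤ m) (hβ1 : 1 < β) (hβ2 : β < 2)
  (hβ : β ^ m = ∑ j ∈ Finset.range m, β ^ j)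
  (σ : ℝ → List ℝ)
  (hσ0 : σ (dd β 0) = [dd β 1, dd β 0])
  (hσi : ∀ i, 1 ≤ i → i ≤ m - 1 → σ (dd β i) = [dd β 1, dd β (i+1)])
  (hσm : σ (dd β m) = [dd β 1])

include hm hσ0 hσi hσm in
lemma sigma_dd {k : ℕ} (hk : k ≤ m) : σ (dd β k) = (tau m k).map (dd β) := by
  rcases Nat.eq_zero_or_pos k with rfl | hk1
  · rw [hσ0]; simp [tau]
  rcases eq_or_lt_of_le hk with rfl | hkm
  · rw [hσm]; simp [tau, show k ≠ 0 by omega]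
  · rw [hσi k hk1 (by omega)]
    simp [tau, show k ≠ 0 by omega, show k ≠ m by omega]

include hm hσ0 hσi hσm in
lemma iterApply : ∀ n : ℕ, ∀ w : List ℕ, (∀ j ∈ w, j ≤ m) →
    (fun l : List ℝ => l.flatMap σ)^[n] (w.map (dd β)) = (w.flatMap (wrd m n)).map (dd β) := by
  intro n
  induction n with
  | zero =>
    intro w hw
    simp only [Function.iterate_zero, id_eq]
    congr 1
    have h0 : wrd m 0 = fun k => ([k] : List ℕ) := funext fun k => rfl
    rw [h0]
    simp
  | succ n IH =>
    intro w hw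
    rw [Function.iterate_succ_apply]
    have h1 : (w.map (dd β)).flatMap σ = (w.flatMap (tau m)).map (dd β) := by
      rw [List.flatMap_map, List.map_flatMap]
      exact flatMap_congr (fun a ha => sigma_dd hm σ hσ0 hσi hσm (hw a ha))
    show (fun l : List ℝ => l.flatMap σ)^[n] ((w.map (dd β)).flatMap σ) = _
    rw [h1]
    rw [IH (w.flatMap (tau m)) ?_]
    · congr 1
      rw [List.flatMap_assoc]
      apply flatMap_congr
      intro a _
      rfl
    · intro j hj
      rw [List.mem_flatMap] at hj
      obtain ⟨a, ha, hja⟩ := hj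
      exact tau_mem_le hm (hw a ha) hja

include hm hβ1 hβ2 hβ in
lemma sort_Xn (n : ℕ) :
    (Xn β n).sort (· ≤ ·) =
      (List.range (((wrd m n 0).map (dd β)).length + 1)).map
        (fun j => (((wrd m n 0).map (dd β)).take j).sum * (β ^ n)⁻¹) := by
  have hb : (0:ℝ) < β := by linarith
  have hbn : (0:ℝ) < β ^ n := pow_pos hb n
  set W := (wrd m n 0).map (dd β) with hW
  set L := (List.range (W.length + 1)).map (fun j => (W.take j).sum * (β ^ n)⁻¹) with hL
  have hpos : ∀ x ∈ W, 0 < x := fun x hx => wrd_letter_pos hm hβ1 hβ2 hβ (by omega) hx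
  have hmono : ∀ {i j : ℕ}, i ∈ List.range (W.length + 1) → j ∈ List.range (W.length + 1) →
      i < j → (W.take i).sum * (β ^ n)⁻¹ < (W.take j).sum * (β ^ n)⁻¹ := by
    intro i j _ hjm hij
    rw [List.mem_range] at hjm
    have := sum_take_lt hpos hij (by omega)
    have hinv : (0:ℝ) < (β ^ n)⁻¹ := by positivity
    nlinarith [this, hinv]
  have hLsorted : L.Pairwise (· < ·) := by
    rw [hL]
    rw [List.pairwise_map]
    apply List.Pairwise.imp_of_mem ?_ List.pairwise_lt_range
    intro a b ha hb' hab
    exact hmono ha hb' hab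
  have hLnodup : L.Nodup := hLsorted.nodup
  have hLfin : L.toFinset = Xn β n := by
    rw [mainPhi hm hβ1 hβ2 hβ n, ← hW]
    ext a
    rw [List.mem_toFinset, hL, List.mem_map, Finset.mem_image]
    constructor
    · rintro ⟨j, hj, rfl⟩
      rw [List.mem_range] at hj
      exact ⟨(W.take j).sum, mem_pf.mpr ⟨j, by omega, rfl⟩, rfl⟩
    · rintro ⟨s, hs, rfl⟩
      obtain ⟨j, hj, rfl⟩ := mem_pf.mp hs
      exact ⟨j, List.mem_range.mpr (by omega), rfl⟩
  apply List.Perm.eq_of_pairwise'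
    (Finset.pairwise_sort _ _)
    (hLsorted.imp le_of_lt)
    (List.perm_of_nodup_nodup_toFinset_eq (Finset.sort_nodup _ _) hLnodup
      (by rw [Finset.sort_toFinset, hLfin]))

end hyp
end S4

/-- `T_n = σ^n(d₀)` for all `n ≥ 1`, where `σ` is the substitution
`d₀ ↦ d₁d₀`, `d_i ↦ d₁d_{i+1}` (`1 ≤ i ≤ m-1`), `d_m ↦ d₁`, extended to words. -/
theorem stmt_4 (m : ℕ) (hm : 2 ≤ m) (β : ℝ) (hβ1 : 1 < β) (hβ2 : β < 2)
    (hβ : β ^ m = ∑ j ∈ Finset.range m, β ^ j)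
    (σ : ℝ → List ℝ)
    (hσ0 : σ (dd β 0) = [dd β 1, dd β 0])
    (hσi : ∀ i, 1 ≤ i → i ≤ m - 1 → σ (dd β i) = [dd β 1, dd β (i+1)])
    (hσm : σ (dd β m) = [dd β 1])
    (n : ℕ) (hn : 1 ≤ n) :
    Tword β n = (fun w : List ℝ => w.flatMap σ)^[n] [dd β 0] := by
  classical
  have hiter : (fun w : List ℝ => w.flatMap σ)^[n] [dd β 0] = (S4.wrd m n 0).map (dd β) := by
    have h := S4.iterApply hm σ hσ0 hσi hσm n [0] (by simp)
    simpa using h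
  rw [hiter]
  set W := (S4.wrd m n 0).map (dd β) with hW
  have hsort := S4.sort_Xn hm hβ1 hβ2 hβ n
  rw [← hW] at hsort
  have hcard : (Xn β n).card = W.length + 1 := by
    rw [← Finset.length_sort (· ≤ ·) (s := Xn β n), hsort]
    simp
  have hpt : ∀ j, j ≤ W.length → pt β n j = (W.take j).sum * (β ^ n)⁻¹ := by
    intro j hj
    rw [pt, hsort, List.getD_eq_getElem _ _ (by simpa using Nat.lt_succ_of_le hj)]
    rw [List.getElem_map, List.getElem_range]
  rw [Tword, hcard]
  simp only [Nat.add_sub_cancel]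
  apply List.ext_getElem
  · simp
  · intro i h1 h2
    have hlen : i < W.length := by simpa using h1
    simp only [List.getElem_map, List.getElem_range]
    rw [hpt (i+1) (by omega), hpt i (by omega)]
    rw [List.sum_take_succ W i hlen]
    have hb : (0:ℝ) < β := by linarith
    have hbn : (β:ℝ) ^ n ≠ 0 := by positivity
    field_simp
    ring
end
end

section
/- Let n ≥ 1 and I ∈ {1,2}^n. If S_I(0) = a_{n,j} with j ≤ #X_n − 3, then [a_{n,j}, a_{n,j+1}] ⊆ S_I([0,1]) ⊆ [a_{n,j}, a_{n,j+2}]. Consequently, the interior of the interval S_I([0,1]) intersects exactly two basic intervals of rank n. -/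
open MeasureTheory

noncomputable section

namespace Stmt5Aux

variable {m : ℕ} {β : ℝ}

lemma dd_zero : dd β 0 = 1 := rfl
lemma dd_one : dd β 1 = β - 1 := rfl
lemma dd_add_two (s : ℕ) : dd β (s+2) = β * dd β (s+1) - (β - 1) := rfl

/-- key identity `(2-β) β^m = 1` -/
lemma key_id (hβ1 : 1 < β) (hβ : β ^ m = ∑ j ∈ Finset.range m, β ^ j) :
    (2 - β) * β ^ m = 1 := by
  have h1 : β - 1 ≠ 0 := by intro h; nlinarith
  have hg : ∑ j ∈ Finset.range m, β ^ j = (β ^ m - 1) / (β - 1) := geom_sum_eq (by intro h; nlinarith) m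
  rw [hg] at hβ
  field_simp at hβ
  nlinarith [hβ]

lemma quad_id (hm : 2 ≤ m) (hβ1 : 1 < β) (hβ : β ^ m = ∑ j ∈ Finset.range m, β ^ j) :
    β + 1 ≤ β ^ 2 := by
  obtain ⟨k, rfl⟩ : ∃ k, m = k + 2 := ⟨m - 2, by omega⟩
  have hb0 : (0:ℝ) < β := by linarith
  have hsum : ∑ j ∈ Finset.range (k+2), β ^ j
      = (∑ j ∈ Finset.range k, β ^ j) + β ^ k + β ^ (k+1) := by
    rw [Finset.sum_range_succ, Finset.sum_range_succ]
  have hkpos : (0:ℝ) ≤ ∑ j ∈ Finset.range k, β ^ j :=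
    Finset.sum_nonneg fun j _ => by positivity
  have h2 : β ^ k + β ^ (k+1) ≤ β ^ (k+2) := by rw [hβ, hsum]; linarith
  have hk : (0:ℝ) < β ^ k := by positivity
  have e1 : β ^ (k+1) = β ^ k * β := by ring
  have e2 : β ^ (k+2) = β ^ k * β ^ 2 := by ring
  rw [e1, e2] at h2
  nlinarith [h2, hk]

variable (hm : 2 ≤ m) (hβ1 : 1 < β) (hβ2 : β < 2) (hβm : (2 - β) * β ^ m = 1)

include hβ1 in
lemma dd_formula {t : ℕ} (ht : 1 ≤ t) : dd β t = 1 - (2 - β) * β ^ (t - 1) := by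
  induction t with
  | zero => omega
  | succ s ih =>
    rcases Nat.eq_or_lt_of_le ht with h | h
    · simp [← h, dd_one]; ring
    · have hs : 1 ≤ s := by omega
      obtain ⟨r, rfl⟩ : ∃ r, s = r + 1 := ⟨s - 1, by omega⟩
      rw [dd_add_two, ih hs]
      have : r + 1 + 1 - 1 = (r + 1 - 1) + 1 := by omega
      rw [this, pow_succ]
      ring

include hβ1 hβ2 hβm in
lemma dd_pos {t : ℕ} (ht : t ≤ m) : 0 < dd β t := by
  rcases Nat.eq_zero_or_pos t with rfl | h1
  · rw [dd_zero]; norm_num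
  · rw [dd_formula hβ1 h1]
    have hlt : β ^ (t-1) < β ^ m := pow_lt_pow_right₀ hβ1 (by omega)
    nlinarith [hlt]

include hβ1 hβ2 in
lemma dd_le_b1 {t : ℕ} (ht : 1 ≤ t) : dd β t ≤ β - 1 := by
  rw [dd_formula hβ1 ht]
  have : (1:ℝ) ≤ β ^ (t-1) := one_le_pow₀ (le_of_lt hβ1)
  nlinarith

include hm hβ1 hβ2 hβm in
lemma dd_m_mul : β * dd β m = β - 1 := by
  have hm1 : 1 ≤ m := by omega
  rw [dd_formula hβ1 hm1]
  have : β * β ^ (m-1) = β ^ m := by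
    rw [← pow_succ']; congr 1; omega
  nlinarith [this]

include hβ1 in
lemma dd_block {t : ℕ} (htm : t ≠ m) :
    dd β 1 + dd β (if t = 0 then 0 else t + 1) = β * dd β t := by
  rcases Nat.eq_zero_or_pos t with rfl | h1
  · norm_num [dd_zero, dd_one]
  · obtain ⟨r, rfl⟩ : ∃ r, t = r + 1 := ⟨t - 1, by omega⟩
    have h0 : (if r + 1 = 0 then 0 else r + 1 + 1) = r + 2 := by simp
    rw [h0, dd_add_two, dd_one]
    ring

include hβ1 hβ2 hβm in
lemma dd_pair (hquad : β + 1 ≤ β ^ 2) {t : ℕ} (ht : t ≤ m) : 1 ≤ dd β 1 + dd β t := by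
  rcases Nat.eq_zero_or_pos t with rfl | h1
  · rw [dd_zero, dd_one]; linarith
  · rw [dd_formula hβ1 h1, dd_one]
    -- need (2-β) * β^(t-1) ≤ β - 1
    have h2 : β ^ (t-1) * β ≤ β ^ m := by
      rw [← pow_succ]
      exact pow_le_pow_right₀ (le_of_lt hβ1) (by omega)
    have hb0 : (0:ℝ) < β := by linarith
    have h3 : (2 - β) * (β ^ (t-1) * β) ≤ 1 := by
      calc (2 - β) * (β ^ (t-1) * β) ≤ (2 - β) * β ^ m := by nlinarith [h2]
      _ = 1 := hβm
    have h4 : (1:ℝ) ≤ (β - 1) * β := by nlinarith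
    have h5 : (2 - β) * β ^ (t-1) * β ≤ (β - 1) * β := by nlinarith
    have h6 : (2 - β) * β ^ (t-1) ≤ β - 1 := le_of_mul_le_mul_right (by linarith [h5]) hb0
    linarith

end Stmt5Aux

namespace Stmt5Aux

variable {m : ℕ} {β : ℝ}

/-- substitution on gap-type words -/
def subst (m : ℕ) : List ℕ → List ℕ
  | [] => []
  | t :: l => if t = m then 1 :: subst m l else 1 :: (if t = 0 then 0 else t + 1) :: subst m l

lemma subst_cons (t : ℕ) (l : List ℕ) :
    subst m (t :: l) =
      if t = m then 1 :: subst m l else 1 :: (if t = 0 then 0 else t + 1) :: subst m l := rfl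

/-- grammar of valid gap-type words -/
inductive G (m : ℕ) : List ℕ → Prop
  | zero : G m [0]
  | one {l : List ℕ} : G m l → G m (1 :: l)
  | big {l : List ℕ} (t : ℕ) : 2 ≤ t → t ≤ m → G m (1 :: l) → G m (t :: 1 :: l)

lemma G_ne_nil {l : List ℕ} (h : G m l) : l ≠ [] := by cases h <;> simp

lemma subst_head (t : ℕ) (l : List ℕ) : ∃ r, subst m (t :: l) = 1 :: r := by
  by_cases h : t = m <;> simp [subst_cons, h]

variable (hm : 2 ≤ m)

include hm in
lemma subst_G {l : List ℕ} (hG : G m l) : G m (subst m l) := by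
  have h1m : (1:ℕ) ≠ m := by omega
  induction hG with
  | zero =>
    rw [subst_cons, if_neg (by omega : (0:ℕ) ≠ m), if_pos rfl]
    exact G.one G.zero
  | @one l hG' ih =>
    obtain ⟨t', l', rfl⟩ : ∃ t' l', l = t' :: l' := by
      cases l with
      | nil => exact absurd rfl (G_ne_nil hG')
      | cons a b => exact ⟨a, b, rfl⟩
    obtain ⟨r, hr⟩ := subst_head (m := m) t' l'
    rw [subst_cons, if_neg h1m, if_neg (by omega : (1:ℕ) ≠ 0), hr]
    rw [hr] at ih
    exact G.one (G.big 2 le_rfl hm ih)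
  | @big l t h2 htm hG' ih =>
    by_cases h : t = m
    · subst h
      rw [subst_cons, if_pos rfl]
      exact G.one ih
    · rw [subst_cons, if_neg h, if_neg (by omega : t ≠ 0)]
      have hsub : subst m (1 :: l) = 1 :: (if (1:ℕ) = 0 then 0 else 2) :: subst m l :=
        subst_cons 1 l ▸ by rw [if_neg h1m]
      rw [if_neg (by omega : (1:ℕ) ≠ 0)] at hsub
      rw [hsub]
      rw [hsub] at ih
      exact G.one (G.big (t+1) (by omega) (by omega) ih)

include hm in
lemma G_le {l : List ℕ} (hG : G m l) : ∀ t ∈ l, t ≤ m := by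
  induction hG with
  | zero => intro t ht; simp at ht; omega
  | @one l hG' ih => intro t ht; rcases List.mem_cons.mp ht with rfl | h; omega; exact ih t h
  | @big l t' h2 htm hG' ih =>
    intro t ht
    rcases List.mem_cons.mp ht with rfl | h
    · exact htm
    · exact ih t h

include hm in
lemma G_inner {l : List ℕ} (hG : G m l) :
    ∀ i, i + 1 < l.length → 1 ≤ l.getD i 0 ∧ l.getD i 0 ≤ m := by
  induction hG with
  | zero => intro i hi; simp at hi
  | @one l hG' ih =>
    intro i hi
    cases i with
    | zero => simp; omega
    | succ i' =>
      simp only [List.getD_cons_succ]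
      exact ih i' (by simpa using hi)
  | @big l t h2 htm hG' ih =>
    intro i hi
    cases i with
    | zero => simp; omega
    | succ i' =>
      simp only [List.getD_cons_succ]
      exact ih i' (by simpa using hi)

lemma G_adj {l : List ℕ} (hG : G m l) :
    ∀ i, i + 1 < l.length → l.getD i 0 = 1 ∨ l.getD (i+1) 0 = 1 := by
  induction hG with
  | zero => intro i hi; simp at hi
  | @one l hG' ih =>
    intro i hi
    cases i with
    | zero => left; rfl
    | succ i' =>
      simp only [List.getD_cons_succ]
      exact ih i' (by simpa using hi)
  | @big l t h2 htm hG' ih =>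
    intro i hi
    cases i with
    | zero => right; rfl
    | succ i' =>
      simp only [List.getD_cons_succ]
      exact ih i' (by simpa using hi)

end Stmt5Aux

namespace Stmt5Aux

variable {m : ℕ} {β : ℝ}

/-- list of points starting at `x` with gap types `ts`, gap unit `δ` -/
def ptsOf (β δ : ℝ) : ℝ → List ℕ → List ℝ
  | x, [] => [x]
  | x, t :: l => x :: ptsOf β δ (x + dd β t * δ) l

lemma ptsOf_nil (x : ℝ) {δ : ℝ} : ptsOf β δ x [] = [x] := rfl
lemma ptsOf_cons (x : ℝ) {δ : ℝ} (t : ℕ) (l : List ℕ) :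
    ptsOf β δ x (t :: l) = x :: ptsOf β δ (x + dd β t * δ) l := rfl

lemma ptsOf_ne_nil {δ x : ℝ} {ts : List ℕ} : ptsOf β δ x ts ≠ [] := by
  cases ts <;> simp [ptsOf_nil, ptsOf_cons]

lemma ptsOf_length {δ : ℝ} (ts : List ℕ) : ∀ x : ℝ, (ptsOf β δ x ts).length = ts.length + 1 := by
  induction ts with
  | nil => intro x; rfl
  | cons t l ih => intro x; simp [ptsOf_cons, ih]

lemma ptsOf_head? {δ : ℝ} (x : ℝ) (ts : List ℕ) : (ptsOf β δ x ts).head? = some x := by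
  cases ts <;> rfl

lemma ptsOf_getD_zero {δ : ℝ} (x : ℝ) (ts : List ℕ) : (ptsOf β δ x ts).getD 0 0 = x := by
  cases ts <;> rfl

lemma ptsOf_self_mem {δ : ℝ} (x : ℝ) (ts : List ℕ) : x ∈ ptsOf β δ x ts := by
  cases ts <;> simp [ptsOf_nil, ptsOf_cons]

lemma ptsOf_gap {δ : ℝ} (ts : List ℕ) :
    ∀ (x : ℝ) (i : ℕ), i < ts.length →
      (ptsOf β δ x ts).getD (i+1) 0 =
        (ptsOf β δ x ts).getD i 0 + dd β (ts.getD i 0) * δ := by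
  induction ts with
  | nil => intro x i hi; simp at hi
  | cons t l ih =>
    intro x i hi
    cases i with
    | zero =>
      simp only [ptsOf_cons, List.getD_cons_succ, List.getD_cons_zero, ptsOf_getD_zero]
    | succ i' =>
      simp only [ptsOf_cons, List.getD_cons_succ]
      exact ih _ i' (by simpa using hi)

lemma ptsOf_chain {δ : ℝ} (hδ : 0 < δ) (ts : List ℕ) (hts : ∀ t ∈ ts, 0 < dd β t) :
    ∀ x : ℝ, (ptsOf β δ x ts).Chain' (· < ·) := by
  induction ts with
  | nil => intro x; simp [ptsOf_nil, List.Chain']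
  | cons t l ih =>
    intro x
    rw [ptsOf_cons, List.Chain', List.isChain_cons]
    constructor
    · intro y hy
      rw [ptsOf_head?] at hy
      cases hy
      nlinarith [hts t (by simp), hδ]
    · exact ih (fun t' ht' => hts t' (by simp [ht'])) _

lemma ptsOf_getLast? {δ : ℝ} (ts : List ℕ) :
    ∀ x : ℝ, (ptsOf β δ x ts).getLast? = some (x + (ts.map (dd β)).sum * δ) := by
  induction ts with
  | nil => intro x; simp [ptsOf_nil]
  | cons t l ih =>
    intro x
    rw [ptsOf_cons]
    cases l with
    | nil =>
      simp only [ptsOf_nil, List.map_cons, List.map_nil, List.sum_cons, List.sum_nil]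
      rw [List.getLast?_cons_cons]
      simp only [List.getLast?_singleton, Option.some.injEq]
      ring
    | cons t' l' =>
      rw [ptsOf_cons, List.getLast?_cons_cons, ← ptsOf_cons, ih]
      congr 1
      simp
      ring

lemma list_toFinset_map (l : List ℝ) (f : ℝ → ℝ) : (l.map f).toFinset = l.toFinset.image f := by
  ext z; simp

variable (hm : 2 ≤ m) (hβ1 : 1 < β) (hβ2 : β < 2) (hβm : (2 - β) * β ^ m = 1)

include hm hβ1 hβ2 hβm in
lemma refine {δ : ℝ} (ts : List ℕ) :
    ∀ x : ℝ, (∀ t ∈ ts, t ≤ m) →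
      (ptsOf β (δ/β) x (subst m ts)).toFinset =
        (ptsOf β δ x ts).toFinset ∪
          ((ptsOf β δ x ts).dropLast.map (fun y => y + (β - 1) * (δ/β))).toFinset := by
  have hb0 : (0:ℝ) < β := by linarith
  induction ts with
  | nil => intro x _; simp [subst, ptsOf_nil]
  | cons t l ih =>
    intro x hle
    have htm : t ≤ m := hle t (by simp)
    have hdrop : (ptsOf β δ x (t :: l)).dropLast
        = x :: (ptsOf β δ (x + dd β t * δ) l).dropLast := by
      rw [ptsOf_cons]
      cases hpl : ptsOf β δ (x + dd β t * δ) l with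
      | nil => exact absurd hpl ptsOf_ne_nil
      | cons a b => simp
    have hyl := ih (x + dd β t * δ) (fun t' ht' => hle t' (by simp [ht']))
    have hymem : (x + dd β t * δ) ∈ ptsOf β δ (x + dd β t * δ) l := ptsOf_self_mem _ l
    by_cases h : t = m
    · have hddm : β * dd β t = β - 1 := by rw [h]; exact dd_m_mul hm hβ1 hβ2 hβm
      have e1 : x + dd β 1 * (δ/β) = x + dd β t * δ := by
        rw [dd_one, ← hddm]; field_simp
      have hxy : x + (β - 1) * (δ/β) = x + dd β t * δ := by rw [← dd_one (β := β), e1]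
      rw [subst_cons, if_pos h, hdrop]
      simp only [ptsOf_cons]
      rw [e1]
      ext z
      have hz := Finset.ext_iff.mp hyl z
      simp only [List.toFinset_cons, List.map_cons, Finset.mem_insert, Finset.mem_union,
        List.mem_toFinset] at hz ⊢
      rw [hz]
      constructor
      · rintro (rfl | (h1 | h2))
        · exact Or.inl (Or.inl rfl)
        · exact Or.inl (Or.inr h1)
        · exact Or.inr (Or.inr h2)
      · rintro ((rfl | h1) | (h2 | h3))
        · exact Or.inl rfl
        · exact Or.inr (Or.inl h1)
        · rw [h2, hxy]; exact Or.inr (Or.inl hymem)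
        · exact Or.inr (Or.inr h3)
    · have hblock := dd_block (β := β) hβ1 (t := t) h
      have e2 : x + dd β 1 * (δ/β) + dd β (if t = 0 then 0 else t + 1) * (δ/β)
          = x + dd β t * δ := by
        have h9 : (dd β 1 + dd β (if t = 0 then 0 else t + 1)) * (δ/β) = dd β t * δ := by
          rw [hblock]; field_simp
        nlinarith [h9]
      have hx1 : x + dd β 1 * (δ/β) = x + (β - 1) * (δ/β) := by rw [dd_one]
      rw [subst_cons, if_neg h, hdrop]
      simp only [ptsOf_cons]
      rw [e2, hx1]
      ext z
      have hz := Finset.ext_iff.mp hyl z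
      simp only [List.toFinset_cons, List.map_cons, Finset.mem_insert, Finset.mem_union,
        List.mem_toFinset] at hz ⊢
      rw [hz]
      tauto

include hm hβ1 hβ2 hβm in
lemma subst_sum (ts : List ℕ) (hle : ∀ t ∈ ts, t ≤ m) :
    ((subst m ts).map (dd β)).sum = β * (ts.map (dd β)).sum := by
  induction ts with
  | nil => simp [subst]
  | cons t l ih =>
    have htm : t ≤ m := hle t (by simp)
    by_cases h : t = m
    · subst h
      rw [subst_cons, if_pos rfl]
      simp only [List.map_cons, List.sum_cons]
      rw [ih (fun t' ht' => hle t' (by simp [ht']))]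
      rw [dd_one, ← dd_m_mul hm hβ1 hβ2 hβm]
      ring
    · rw [subst_cons, if_neg h]
      simp only [List.map_cons, List.sum_cons]
      rw [ih (fun t' ht' => hle t' (by simp [ht']))]
      have := dd_block (β := β) hβ1 (t := t) h
      nlinarith [this]

end Stmt5Aux

namespace Stmt5Aux

variable {m : ℕ} {β : ℝ}

lemma smap_apply (i : Fin 2) (y : ℝ) : Smap β i y = y / β + Smap β i 0 := by
  unfold Smap; split <;> simp

lemma sapply_affine (hb : β ≠ 0) : ∀ {n : ℕ} (I : Fin n → Fin 2) (x : ℝ),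
    Sapply β I x = Sapply β I 0 + x / β ^ n := by
  intro n
  induction n with
  | zero => intro I x; simp [Sapply]
  | succ n ih =>
    intro I x
    show Smap β (I 0) (Sapply β (fun k => I k.succ) x)
      = Smap β (I 0) (Sapply β (fun k => I k.succ) 0) + x / β ^ (n+1)
    rw [smap_apply, ih, smap_apply (I 0) (Sapply β (fun k => I k.succ) 0)]
    rw [add_div, div_div, ← pow_succ]
    ring

lemma sapply_succ {n : ℕ} (I : Fin (n+1) → Fin 2) (x : ℝ) :
    Sapply β I x = Smap β (I 0) (Sapply β (fun k => I k.succ) x) := rfl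

lemma sapply_snoc : ∀ {n : ℕ} (J : Fin n → Fin 2) (i : Fin 2),
    Sapply β (Fin.snoc J i) 0 = Sapply β J (Smap β i 0) := by
  intro n
  induction n with
  | zero =>
    intro J i
    rw [sapply_succ]
    have h0 : ((0 : Fin 1)) = Fin.last 0 := rfl
    have h3 : (Fin.snoc (α := fun _ => Fin 2) J i) 0 = i := by rw [h0, Fin.snoc_last]
    rw [h3]
    show Smap β i (Sapply β (fun k : Fin 0 => Fin.snoc (α := fun _ => Fin 2) J i k.succ) 0) = Smap β i 0
    congr 1
  | succ n ih =>
    intro J i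
    rw [sapply_succ (Fin.snoc J i), sapply_succ J]
    have h1 : (Fin.snoc (α := fun _ => Fin 2) J i) 0 = J 0 := by
      have : ((0 : Fin (n+2))) = Fin.castSucc 0 := rfl
      rw [this, Fin.snoc_castSucc]
    have h2 : (fun k : Fin (n+1) => (Fin.snoc (α := fun _ => Fin 2) J i) k.succ)
        = (Fin.snoc (fun k : Fin n => J k.succ) i : Fin (n+1) → Fin 2) := by
      funext k
      induction k using Fin.lastCases with
      | last =>
        have : (Fin.last n).succ = Fin.last (n+1) := rfl
        rw [this, Fin.snoc_last, Fin.snoc_last]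
      | cast k =>
        rw [Fin.succ_castSucc, Fin.snoc_castSucc, Fin.snoc_castSucc]
    rw [h1, h2, ih]

lemma sapply_bounds (hβ1 : 1 < β) : ∀ {n : ℕ} (I : Fin n → Fin 2),
    0 ≤ Sapply β I 0 ∧ Sapply β I 0 ≤ 1 - (β ^ n)⁻¹ := by
  have hb0 : (0:ℝ) < β := by linarith
  intro n
  induction n with
  | zero => intro I; simp [Sapply]
  | succ n ih =>
    intro I
    obtain ⟨h1, h2⟩ := ih (fun k => I k.succ)
    have hpn : (0:ℝ) < β ^ n := by positivity
    have hpn1 : (0:ℝ) < β ^ (n+1) := by positivity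
    have hinv : (β ^ (n+1))⁻¹ * β = (β ^ n)⁻¹ := by
      rw [pow_succ, mul_inv]
      field_simp
    show 0 ≤ Smap β (I 0) (Sapply β (fun k => I k.succ) 0)
      ∧ Smap β (I 0) (Sapply β (fun k => I k.succ) 0) ≤ 1 - (β ^ (n+1))⁻¹
    set a := Sapply β (fun k => I k.succ) 0 with ha
    unfold Smap
    have hinvle : (β^n)⁻¹ ≤ 1 := by
      rw [inv_le_one_iff₀]; right; exact one_le_pow₀ (le_of_lt hβ1)
    split
    · constructor
      · positivity
      · rw [div_le_iff₀ hb0]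
        have : (1 - (β ^ (n+1))⁻¹) * β = β - (β^n)⁻¹ := by
          rw [sub_mul, one_mul, ← hinv]
        rw [this]
        linarith
    · constructor
      · have : 0 ≤ 1 - 1/β := by
          rw [sub_nonneg, div_le_one hb0]; linarith
        positivity
      · rw [div_add' _ _ _ (ne_of_gt hb0), div_le_iff₀ hb0]
        have : (1 - (β ^ (n+1))⁻¹) * β = β - (β^n)⁻¹ := by
          rw [sub_mul, one_mul, ← hinv]
        rw [this]
        have : (1 - 1/β) * β = β - 1 := by field_simp
        nlinarith [h2]

lemma mem_Xn {x : ℝ} {n : ℕ} :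
    x ∈ Xn β n ↔ (∃ I : Fin n → Fin 2, Sapply β I 0 = x) ∨ x = 1 := by
  simp [Xn, or_comm]

lemma smap_zero_zero : Smap β 0 0 = 0 := by simp [Smap]

lemma smap_one_zero (hb : β ≠ 0) : Smap β 1 0 = 1 - 1/β := by
  simp [Smap]

lemma Xn_succ (hβ1 : 1 < β) (n : ℕ) :
    Xn β (n+1) = Xn β n ∪ ((Xn β n).erase 1).image (fun y => y + (β - 1) * (β ^ (n+1))⁻¹) := by
  have hb0 : (0:ℝ) < β := by linarith
  have hb : β ≠ 0 := ne_of_gt hb0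
  have hcc : (1 - 1/β) / β ^ n = (β - 1) * (β ^ (n+1))⁻¹ := by
    have h1 : (1 - 1/β) = (β-1)/β := by field_simp
    rw [h1, div_div, ← pow_succ', div_eq_mul_inv]
  ext x
  simp only [Finset.mem_union, Finset.mem_image, Finset.mem_erase, mem_Xn]
  constructor
  · rintro (⟨I, rfl⟩ | rfl)
    · have hI : Fin.snoc (Fin.init I) (I (Fin.last n)) = I := Fin.snoc_init_self I
      rw [← hI, sapply_snoc, sapply_affine hb]
      have hlt : Sapply β (Fin.init I) 0 ≤ 1 - (β^n)⁻¹ := (sapply_bounds hβ1 _).2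
      have hpn : (0:ℝ) < β ^ n := by positivity
      have hne1 : Sapply β (Fin.init I) 0 ≠ 1 := by
        intro h; rw [h] at hlt
        have : (0:ℝ) < (β^n)⁻¹ := by positivity
        linarith
      obtain ⟨v, hv⟩ : ∃ v : Fin 2, I (Fin.last n) = v := ⟨_, rfl⟩
      fin_cases v
      · have h0 : Smap β (I (Fin.last n)) 0 = 0 := by rw [hv]; simp [Smap]
        rw [h0]
        left; left
        exact ⟨Fin.init I, by simp⟩
      · have h0 : Smap β (I (Fin.last n)) 0 = 1 - 1/β := by
          rw [hv]; simp only [Smap]; norm_num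
        rw [h0, hcc]
        right
        exact ⟨Sapply β (Fin.init I) 0, ⟨hne1, Or.inl ⟨Fin.init I, rfl⟩⟩, rfl⟩
    · left; right; rfl
  · rintro ((⟨J, rfl⟩ | rfl) | ⟨y, ⟨hy1, hy2⟩, rfl⟩)
    · left
      refine ⟨Fin.snoc J 0, ?_⟩
      rw [sapply_snoc, smap_zero_zero]
    · right; rfl
    · rcases hy2 with ⟨J, rfl⟩ | rfl
      · left
        refine ⟨Fin.snoc J 1, ?_⟩
        rw [sapply_snoc, smap_one_zero hb, sapply_affine hb, hcc]
      · exact absurd rfl hy1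

end Stmt5Aux

namespace Stmt5Aux

variable {m : ℕ} {β : ℝ}

lemma dropLast_toFinset {l : List ℝ} (hnd : l.Nodup) {a : ℝ} (hl : l.getLast? = some a) :
    l.dropLast.toFinset = l.toFinset.erase a := by
  have happ : l.dropLast ++ [a] = l := List.dropLast_append_getLast? a hl
  have hnd2 : (l.dropLast ++ [a]).Nodup := by rw [happ]; exact hnd
  have hna : a ∉ l.dropLast := by
    intro hmem
    rcases List.nodup_append'.mp hnd2 with ⟨-, -, hdisj⟩
    exact hdisj hmem (by simp)
  ext z
  simp only [List.mem_toFinset, Finset.mem_erase]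
  have hzl : z ∈ l ↔ z ∈ l.dropLast ∨ z = a := by
    conv_lhs => rw [← happ]
    simp [List.mem_append]
  rw [hzl]
  constructor
  · intro hz
    exact ⟨by rintro rfl; exact hna hz, Or.inl hz⟩
  · rintro ⟨hne, hz | rfl⟩
    · exact hz
    · exact absurd rfl hne

variable (hm : 2 ≤ m) (hβ1 : 1 < β) (hβ2 : β < 2) (hβm : (2 - β) * β ^ m = 1)

include hm hβ1 hβ2 hβm in
lemma struct (n : ℕ) :
    ∃ ts : List ℕ, G m ts ∧ (ts.map (dd β)).sum = β ^ n ∧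
      (ptsOf β ((β ^ n)⁻¹) 0 ts).toFinset = Xn β n := by
  have hb0 : (0:ℝ) < β := by linarith
  induction n with
  | zero =>
    refine ⟨[0], G.zero, by simp [dd_zero], ?_⟩
    have h1 : ptsOf β ((β ^ 0)⁻¹) 0 [0] = [0, 1] := by
      simp [ptsOf_cons, ptsOf_nil, dd_zero]
    rw [h1]
    ext z
    simp only [List.toFinset_cons, List.toFinset_nil, mem_Xn]
    constructor
    · intro hz
      rcases (by simpa using hz : z = 0 ∨ z = 1) with rfl | rfl
      · exact Or.inl ⟨fun k => k.elim0, rfl⟩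
      · exact Or.inr rfl
    · rintro (⟨I, rfl⟩ | rfl) <;> simp [Sapply]
  | succ n ih =>
    obtain ⟨ts, hG, hsum, hset⟩ := ih
    have hle : ∀ t ∈ ts, t ≤ m := G_le hm hG
    refine ⟨subst m ts, subst_G hm hG, ?_, ?_⟩
    · rw [subst_sum hm hβ1 hβ2 hβm ts hle, hsum, pow_succ]
      ring
    · have hδ : ((β ^ (n+1))⁻¹ : ℝ) = (β ^ n)⁻¹ / β := by
        rw [pow_succ, mul_inv, div_eq_mul_inv]
      rw [hδ, refine hm hβ1 hβ2 hβm ts 0 hle]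
      -- identify the pieces
      have hnodup : (ptsOf β ((β ^ n)⁻¹) 0 ts).Nodup := by
        have hchain := ptsOf_chain (β := β) (by positivity : (0:ℝ) < (β ^ n)⁻¹) ts
          (fun t ht => dd_pos hβ1 hβ2 hβm (hle t ht)) 0
        exact (List.isChain_iff_pairwise.mp hchain).nodup
      have hlast : (ptsOf β ((β ^ n)⁻¹) 0 ts).getLast? = some 1 := by
        rw [ptsOf_getLast? ts 0, hsum]
        congr 1
        rw [zero_add, mul_inv_cancel₀ (by positivity : (β:ℝ)^n ≠ 0)]
      rw [list_toFinset_map, dropLast_toFinset hnodup hlast, hset, Xn_succ hβ1 n, hδ]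

end Stmt5Aux

namespace Stmt5Aux

lemma sort_eq {s : Finset ℝ} {l : List ℝ} (hl : l.Pairwise (· < ·)) (h : l.toFinset = s) :
    s.sort (· ≤ ·) = l := by
  apply List.Perm.eq_of_pairwise' (l₂ := l) (Finset.pairwise_sort _ _) ?_
    (List.perm_of_nodup_nodup_toFinset_eq (s.sort_nodup _) hl.nodup
      (by rw [Finset.sort_toFinset, h]))
  exact hl.imp le_of_lt

lemma getD_strict_mono {l : List ℝ} (h : l.Pairwise (· < ·)) {i k : ℕ}
    (hik : i < k) (hk : k < l.length) : l.getD i 0 < l.getD k 0 := by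
  rw [List.getD_eq_getElem l 0 (lt_trans hik hk), List.getD_eq_getElem l 0 hk]
  exact List.pairwise_iff_getElem.mp h i k (lt_trans hik hk) hk hik

lemma getD_mono {l : List ℝ} (h : l.Pairwise (· < ·)) {i k : ℕ}
    (hik : i ≤ k) (hk : k < l.length) : l.getD i 0 ≤ l.getD k 0 := by
  rcases Nat.eq_or_lt_of_le hik with rfl | hlt
  · exact le_refl _
  · exact le_of_lt (getD_strict_mono h hlt hk)

end Stmt5Aux



set_option maxHeartbeats 2000000 in
open Stmt5Aux in
/-- if `S_I(0) = a_{n,j}` with `j ≤ #X_n - 3`, then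
`[a_{n,j}, a_{n,j+1}] ⊆ S_I([0,1]) ⊆ [a_{n,j}, a_{n,j+2}]`, and the interior of
`S_I([0,1])` meets exactly two basic intervals of rank `n`. -/
theorem stmt_5 (m : ℕ) (hm : 2 ≤ m) (β : ℝ) (hβ1 : 1 < β) (hβ2 : β < 2)
    (hβ : β ^ m = ∑ j ∈ Finset.range m, β ^ j)
    (n : ℕ) (hn : 1 ≤ n) (I : Fin n → Fin 2) (j : ℕ)
    (hIj : Sapply β I 0 = pt β n j) (hj : j + 2 < (Xn β n).card) :
    Set.Icc (pt β n j) (pt β n (j+1)) ⊆ Sapply β I '' Set.Icc (0:ℝ) 1 ∧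
    Sapply β I '' Set.Icc (0:ℝ) 1 ⊆ Set.Icc (pt β n j) (pt β n (j+2)) ∧
    {k : ℕ | k + 1 < (Xn β n).card ∧
      (interior (Sapply β I '' Set.Icc (0:ℝ) 1) ∩
        Set.Icc (pt β n k) (pt β n (k+1))).Nonempty}.ncard = 2 := by
  have hb0 : (0:ℝ) < β := by linarith
  have hβm : (2 - β) * β ^ m = 1 := key_id hβ1 hβ
  have hquad : β + 1 ≤ β ^ 2 := quad_id hm hβ1 hβ
  obtain ⟨ts, hG, hsum, hset⟩ := struct hm hβ1 hβ2 hβm n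
  set δ : ℝ := (β ^ n)⁻¹ with hδdef
  have hδ0 : 0 < δ := by positivity
  set L : List ℝ := ptsOf β δ 0 ts with hLdef
  have hle : ∀ t ∈ ts, t ≤ m := G_le hm hG
  have hpw : L.Pairwise (· < ·) := List.isChain_iff_pairwise.mp
    (ptsOf_chain hδ0 ts (fun t ht => dd_pos hβ1 hβ2 hβm (hle t ht)) 0)
  have hsort : (Xn β n).sort (· ≤ ·) = L := sort_eq hpw hset
  have hptL : ∀ i, pt β n i = L.getD i 0 := by intro i; rw [pt, hsort]
  have hlen : L.length = ts.length + 1 := ptsOf_length ts 0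
  have hcard : (Xn β n).card = ts.length + 1 := by
    rw [← Finset.length_sort (α := ℝ) (· ≤ ·), hsort, hlen]
  have hj1 : j + 1 < ts.length := by omega
  have hj0 : j < ts.length := by omega
  -- gap formulas
  have e1 : L.getD (j+1) 0 = L.getD j 0 + dd β (ts.getD j 0) * δ := ptsOf_gap ts 0 j hj0
  have e2 : L.getD (j+2) 0 = L.getD (j+1) 0 + dd β (ts.getD (j+1) 0) * δ := ptsOf_gap ts 0 (j+1) hj1
  have ht0 : 1 ≤ ts.getD j 0 ∧ ts.getD j 0 ≤ m := G_inner hm hG j hj1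
  have ht1m : ts.getD (j+1) 0 ≤ m := by
    rw [List.getD_eq_getElem ts 0 hj1]
    exact hle _ (List.getElem_mem _)
  have hadj : ts.getD j 0 = 1 ∨ ts.getD (j+1) 0 = 1 := G_adj hG j hj1
  have hd0pos : 0 < dd β (ts.getD j 0) := dd_pos hβ1 hβ2 hβm ht0.2
  have hd1pos : 0 < dd β (ts.getD (j+1) 0) := dd_pos hβ1 hβ2 hβm ht1m
  have hd0le : dd β (ts.getD j 0) ≤ β - 1 := dd_le_b1 hβ1 hβ2 ht0.1
  have hdsum : 1 ≤ dd β (ts.getD j 0) + dd β (ts.getD (j+1) 0) := by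
    rcases hadj with h | h
    · rw [h, dd_one] at *
      have := dd_pair hβ1 hβ2 hβm hquad ht1m
      rw [dd_one] at this
      linarith
    · rw [h, dd_one] at *
      have := dd_pair hβ1 hβ2 hβm hquad ht0.2
      rw [dd_one] at this
      linarith
  -- numeric abbreviations
  set a : ℝ := L.getD j 0 with ha
  have hgap1 : L.getD (j+1) 0 < a + δ := by
    rw [e1]
    have : dd β (ts.getD j 0) * δ < 1 * δ := by
      apply mul_lt_mul_of_pos_right _ hδ0
      linarith
    linarith
  have hgap0 : a < L.getD (j+1) 0 := by
    rw [e1]; nlinarith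
  have hgap2 : a + δ ≤ L.getD (j+2) 0 := by
    rw [e2, e1]
    nlinarith
  -- the image of [0,1]
  have haff : ∀ x : ℝ, Sapply β I x = a + x * δ := by
    intro x
    rw [sapply_affine (ne_of_gt hb0) I x, hIj, hptL j, div_eq_mul_inv, ← hδdef, ← ha]
  have himg : Sapply β I '' Set.Icc 0 1 = Set.Icc a (a + δ) := by
    ext z
    simp only [Set.mem_image, Set.mem_Icc]
    constructor
    · rintro ⟨w, ⟨hw0, hw1⟩, rfl⟩
      rw [haff]
      constructor <;> nlinarith
    · rintro ⟨hz0, hz1⟩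
      refine ⟨(z - a) * β ^ n, ⟨?_, ?_⟩, ?_⟩
      · nlinarith [pow_pos hb0 n]
      · have h9 : z - a ≤ δ := by linarith
        have := mul_le_mul_of_nonneg_right h9 (le_of_lt (pow_pos hb0 n))
        rw [hδdef] at this
        rw [inv_mul_cancel₀ (ne_of_gt (pow_pos hb0 n))] at this
        linarith
      · rw [haff]
        have : (z - a) * β ^ n * δ = (z - a) * (β ^ n * δ) := by ring
        rw [this, hδdef, mul_inv_cancel₀ (ne_of_gt (pow_pos hb0 n))]
        ring
  rw [hptL j, hptL (j+1), hptL (j+2), himg, ← ha]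
  refine ⟨?_, ?_, ?_⟩
  · exact Set.Icc_subset_Icc le_rfl (le_of_lt hgap1)
  · exact Set.Icc_subset_Icc le_rfl hgap2
  · have hint : interior (Set.Icc a (a + δ)) = Set.Ioo a (a + δ) := interior_Icc
    rw [hint]
    have hseteq : {k : ℕ | k + 1 < (Xn β n).card ∧
        (Set.Ioo a (a + δ) ∩ Set.Icc (pt β n k) (pt β n (k+1))).Nonempty}
        = {j, j+1} := by
      ext k
      simp only [Set.mem_setOf_eq, Set.mem_insert_iff, Set.mem_singleton_iff]
      constructor
      · rintro ⟨hk1, x, ⟨hxa, hxb⟩, hxk1, hxk2⟩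
        rw [hptL k] at hxk1
        rw [hptL (k+1)] at hxk2
        by_contra hcon
        push_neg at hcon
        rcases Nat.lt_or_ge k j with hlt | hge
        · -- k + 1 ≤ j
          have : L.getD (k+1) 0 ≤ a := by
            rw [ha]
            exact getD_mono hpw (by omega) (by omega)
          linarith
        · have hk2 : j + 2 ≤ k := by omega
          have : L.getD (j+2) 0 ≤ L.getD k 0 :=
            getD_mono hpw (by omega) (by omega)
          linarith
      · rintro (hk | hk) <;> rw [hk]
        · refine ⟨by omega, (a + L.getD (j+1) 0)/2, ⟨?_, ?_⟩, ?_, ?_⟩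
          · linarith
          · linarith
          · rw [hptL j]; linarith
          · rw [hptL (j+1)]; linarith
        · refine ⟨by omega, (L.getD (j+1) 0 + (a + δ))/2, ⟨?_, ?_⟩, ?_, ?_⟩
          · linarith
          · linarith
          · rw [hptL (j+1)]; linarith
          · rw [hptL (j+1+1)]; linarith
    rw [hseteq]
    exact Set.ncard_pair (by omega)
end
end
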